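/- arXiv:2103.11387 — 2 statements merged into one kernel-verified Lean document; each statement's English description precedes it below -/
import Mathlib

section
/- Let D be a fully contextual double Boolean algebra. Then the map h defined by h(x) := (F_{¬x}, I_x) is a dBa isomorphism from D onto the dBa of clopen object oriented protoconcepts of K^T_pr(D). -/
universe u v

/-- A double Boolean algebra (dBa). -/
structure DBA (D : Type u) where
  sup : D → D → D
  inf : D → D → D
  neg : D → D
  dneg : D → D
  top : D
  bot : D
  ax1a : ∀ x y, inf (inf x x) y = inf x y
  ax2a : ∀ x y, inf x y = inf y x
  ax3a : ∀ x y z, inf x (inf y z) = inf (inf x y) z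
  ax4a : ∀ x, neg (inf x x) = neg x
  ax5a : ∀ x y, inf x (sup x y) = inf x x
  ax6a : ∀ x y z, inf x (neg (inf (neg y) (neg z))) =
      neg (inf (neg (inf x y)) (neg (inf x z)))
  ax7a : ∀ x y, inf x (neg (inf (neg x) (neg y))) = inf x x
  ax8a : ∀ x y, neg (neg (inf x y)) = inf x y
  ax9a : ∀ x, inf x (neg x) = bot
  ax10a : neg bot = inf top top
  ax11a : neg top = bot
  ax1b : ∀ x y, sup (sup x x) y = sup x y
  ax2b : ∀ x y, sup x y = sup y x
  ax3b : ∀ x y z, sup x (sup y z) = sup (sup x y) z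
  ax4b : ∀ x, dneg (sup x x) = dneg x
  ax5b : ∀ x y, sup x (inf x y) = sup x x
  ax6b : ∀ x y z, sup x (dneg (sup (dneg y) (dneg z))) =
      dneg (sup (dneg (sup x y)) (dneg (sup x z)))
  ax7b : ∀ x y, sup x (dneg (sup (dneg x) (dneg y))) = sup x x
  ax8b : ∀ x y, dneg (dneg (sup x y)) = sup x y
  ax9b : ∀ x, sup x (dneg x) = top
  ax10b : dneg top = sup bot bot
  ax11b : dneg bot = top
  ax12 : ∀ x, sup (inf x x) (inf x x) = inf (sup x x) (sup x x)

namespace DBA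

variable {D : Type u} {E : Type v}

/-- x ∨ y := ¬(¬x ⊓ ¬y) -/
def vee (A : DBA D) (x y : D) : D := A.neg (A.inf (A.neg x) (A.neg y))

/-- x ∧ y := ⌟(⌟x ⊔ ⌟y) -/
def wedge (A : DBA D) (x y : D) : D := A.dneg (A.sup (A.dneg x) (A.dneg y))

/-- The quasi-order ⊑. -/
def le (A : DBA D) (x y : D) : Prop := A.inf x y = A.inf x x ∧ A.sup x y = A.sup y y

def IsFilter (A : DBA D) (F : Set D) : Prop :=
  (∀ x ∈ F, ∀ y ∈ F, A.inf x y ∈ F) ∧ ∀ x ∈ F, ∀ z, A.le x z → z ∈ F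

def IsIdeal (A : DBA D) (I : Set D) : Prop :=
  (∀ x ∈ I, ∀ y ∈ I, A.sup x y ∈ I) ∧ ∀ x ∈ I, ∀ z, A.le z x → z ∈ I

def IsPrimaryFilter (A : DBA D) (F : Set D) : Prop :=
  A.IsFilter F ∧ F ≠ Set.univ ∧ ∀ x, x ∈ F ∨ A.neg x ∈ F

def IsPrimaryIdeal (A : DBA D) (I : Set D) : Prop :=
  A.IsIdeal I ∧ I ≠ Set.univ ∧ ∀ x, x ∈ I ∨ A.dneg x ∈ I

def Pure (A : DBA D) : Prop := ∀ x, A.inf x x = x ∨ A.sup x x = x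

def Contextual (A : DBA D) : Prop := ∀ x y, A.le x y → A.le y x → x = y

def FullyContextual (A : DBA D) : Prop :=
  A.Contextual ∧
    ∀ y x, A.inf y y = y → A.sup x x = x → A.sup y y = A.inf x x →
      ∃! z, A.inf z z = y ∧ A.sup z z = x

/-- D_p = D_⊓ ∪ D_⊔ -/
def Dp (A : DBA D) : Set D := {x | A.inf x x = x} ∪ {x | A.sup x x = x}

def IsHom (A : DBA D) (B : DBA E) (h : D → E) : Prop :=
  (∀ x y, h (A.inf x y) = B.inf (h x) (h y)) ∧
  (∀ x y, h (A.sup x y) = B.sup (h x) (h y)) ∧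
  (∀ x, h (A.neg x) = B.neg (h x)) ∧
  (∀ x, h (A.dneg x) = B.dneg (h x)) ∧
  h A.top = B.top ∧ h A.bot = B.bot

def IsHomOn (A : DBA D) (B : DBA E) (S : Set D) (h : D → E) : Prop :=
  (∀ x ∈ S, ∀ y ∈ S, h (A.inf x y) = B.inf (h x) (h y)) ∧
  (∀ x ∈ S, ∀ y ∈ S, h (A.sup x y) = B.sup (h x) (h y)) ∧
  (∀ x ∈ S, h (A.neg x) = B.neg (h x)) ∧
  (∀ x ∈ S, h (A.dneg x) = B.dneg (h x)) ∧
  h A.top = B.top ∧ h A.bot = B.bot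

end DBA

section FCA

variable {G : Type u} {M : Type v}

/-- B^◇ -/
def odia (R : G → M → Prop) (B : Set M) : Set G := {g | ∃ m ∈ B, R g m}
/-- B^□ -/
def obox (R : G → M → Prop) (B : Set M) : Set G := {g | ∀ m, R g m → m ∈ B}
/-- A^◆ -/
def obdia (R : G → M → Prop) (A : Set G) : Set M := {m | ∃ g ∈ A, R g m}
/-- A^■ -/
def obbox (R : G → M → Prop) (A : Set G) : Set M := {m | ∀ g, R g m → g ∈ A}

def pinf (R : G → M → Prop) (p q : Set G × Set M) : Set G × Set M :=
  (p.1 ∪ q.1, obbox R (p.1 ∪ q.1))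
def psup (R : G → M → Prop) (p q : Set G × Set M) : Set G × Set M :=
  (odia R (p.2 ∩ q.2), p.2 ∩ q.2)
def pneg (R : G → M → Prop) (p : Set G × Set M) : Set G × Set M :=
  (p.1ᶜ, obbox R p.1ᶜ)
def pdneg (R : G → M → Prop) (p : Set G × Set M) : Set G × Set M :=
  (odia R p.2ᶜ, p.2ᶜ)
def ptop : Set G × Set M := (∅, ∅)
def pbot : Set G × Set M := (Set.univ, Set.univ)
/-- quasi-order on pairs: (A,B) ⊑ (C,D) iff C ⊆ A and D ⊆ B -/
def ple (p q : Set G × Set M) : Prop := q.1 ⊆ p.1 ∧ q.2 ⊆ p.2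

/-- object oriented protoconcept -/
def IsProto (R : G → M → Prop) (p : Set G × Set M) : Prop :=
  odia R (obbox R p.1) = odia R p.2
/-- object oriented semiconcept -/
def IsSemi (R : G → M → Prop) (p : Set G × Set M) : Prop :=
  obbox R p.1 = p.2 ∨ odia R p.2 = p.1

/-- continuity of the relation R -/
def ContRel [TopologicalSpace G] [TopologicalSpace M] (R : G → M → Prop) : Prop :=
  ∀ O : Set M, IsOpen O → IsOpen (odia R O) ∧ IsOpen (obox R O)
/-- continuity of the converse relation R⁻¹ -/
def ContRelInv [TopologicalSpace G] [TopologicalSpace M] (R : G → M → Prop) : Prop :=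
  ∀ O : Set G, IsOpen O → IsOpen (obdia R O) ∧ IsOpen (obbox R O)

def IsClopenProto [TopologicalSpace G] [TopologicalSpace M] (R : G → M → Prop)
    (p : Set G × Set M) : Prop :=
  IsProto R p ∧ IsClopen p.1 ∧ IsClopen p.2

def IsClopenSemi [TopologicalSpace G] [TopologicalSpace M] (R : G → M → Prop)
    (p : Set G × Set M) : Prop :=
  IsSemi R p ∧ IsClopen p.1 ∧ IsClopen p.2

def pmap {G' : Type*} {M' : Type*} (α : G → G') (β : M → M') (p : Set G' × Set M') :
    Set G × Set M := (α ⁻¹' p.1, β ⁻¹' p.2)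

end FCA

section StoneDBA

variable {D : Type u}

/-- the set of primary filters of a dBa, as a type -/
def PrimF (A : DBA D) : Type u := {F : Set D // A.IsPrimaryFilter F}
/-- the set of primary ideals of a dBa, as a type -/
def PrimI (A : DBA D) : Type u := {I : Set D // A.IsPrimaryIdeal I}
/-- F ∇ I iff F ∩ I = ∅ -/
def nabla (A : DBA D) : PrimF A → PrimI A → Prop := fun F I => F.val ∩ I.val = ∅
/-- F_x -/
def Fset (A : DBA D) (x : D) : Set (PrimF A) := {F | x ∈ F.val}
/-- I_x -/
def Iset (A : DBA D) (x : D) : Set (PrimI A) := {I | x ∈ I.val}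

/-- the topology T on primary filters, with the F_x as a subbase of closed sets -/
def filtTop (A : DBA D) : TopologicalSpace (PrimF A) :=
  TopologicalSpace.generateFrom {U | ∃ x : D, U = (Fset A x)ᶜ}
/-- the topology J on primary ideals, with the I_x as a subbase of closed sets -/
def idlTop (A : DBA D) : TopologicalSpace (PrimI A) :=
  TopologicalSpace.generateFrom {U | ∃ x : D, U = (Iset A x)ᶜ}

/-- the map h(x) := (F_{¬x}, I_x) -/
def protoEmb (A : DBA D) (x : D) : Set (PrimF A) × Set (PrimI A) :=
  (Fset A (A.neg x), Iset A x)

end StoneDBA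

section SemiPrim

variable {G : Type u} {M : Type v} [TopologicalSpace G] [TopologicalSpace M]

/-- a primary filter of the dBa of clopen object oriented semiconcepts -/
def IsSemiPrimFilter (R : G → M → Prop) (F : Set (Set G × Set M)) : Prop :=
  (∀ p ∈ F, IsClopenSemi R p) ∧
  (∀ p ∈ F, ∀ q ∈ F, pinf R p q ∈ F) ∧
  (∀ p ∈ F, ∀ z, IsClopenSemi R z → ple p z → z ∈ F) ∧
  F ≠ {p | IsClopenSemi R p} ∧
  (∀ p, IsClopenSemi R p → (p ∈ F ∨ pneg R p ∈ F))

/-- a primary ideal of the dBa of clopen object oriented semiconcepts -/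
def IsSemiPrimIdeal (R : G → M → Prop) (I : Set (Set G × Set M)) : Prop :=
  (∀ p ∈ I, IsClopenSemi R p) ∧
  (∀ p ∈ I, ∀ q ∈ I, psup R p q ∈ I) ∧
  (∀ p ∈ I, ∀ z, IsClopenSemi R z → ple z p → z ∈ I) ∧
  I ≠ {p | IsClopenSemi R p} ∧
  (∀ p, IsClopenSemi R p → (p ∈ I ∨ pdneg R p ∈ I))

def SemiPF (R : G → M → Prop) := {F : Set (Set G × Set M) // IsSemiPrimFilter R F}
def SemiPI (R : G → M → Prop) := {I : Set (Set G × Set M) // IsSemiPrimIdeal R I}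

def semiPFTop (R : G → M → Prop) : TopologicalSpace (SemiPF R) :=
  TopologicalSpace.generateFrom
    {U | ∃ p, IsClopenSemi R p ∧ U = {F : SemiPF R | p ∈ F.val}ᶜ}
def semiPITop (R : G → M → Prop) : TopologicalSpace (SemiPI R) :=
  TopologicalSpace.generateFrom
    {U | ∃ p, IsClopenSemi R p ∧ U = {I : SemiPI R | p ∈ I.val}ᶜ}

end SemiPrim


/-! ### Auxiliary development for the representation theorem -/

namespace DBA

variable {D : Type u}

instance instAssocInf (A : DBA D) : Std.Associative A.inf := ⟨fun a b c => (A.ax3a a b c).symm⟩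
instance instCommInf (A : DBA D) : Std.Commutative A.inf := ⟨A.ax2a⟩
instance instAssocSup (A : DBA D) : Std.Associative A.sup := ⟨fun a b c => (A.ax3b a b c).symm⟩
instance instCommSup (A : DBA D) : Std.Commutative A.sup := ⟨A.ax2b⟩

/-- The dual double Boolean algebra. -/
def dual (A : DBA D) : DBA D where
  sup := A.inf
  inf := A.sup
  neg := A.dneg
  dneg := A.neg
  top := A.bot
  bot := A.top
  ax1a := A.ax1b
  ax2a := A.ax2b
  ax3a := A.ax3b
  ax4a := A.ax4b
  ax5a := A.ax5b
  ax6a := A.ax6b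
  ax7a := A.ax7b
  ax8a := A.ax8b
  ax9a := A.ax9b
  ax10a := A.ax10b
  ax11a := A.ax11b
  ax1b := A.ax1a
  ax2b := A.ax2a
  ax3b := A.ax3a
  ax4b := A.ax4a
  ax5b := A.ax5a
  ax6b := A.ax6a
  ax7b := A.ax7a
  ax8b := A.ax8a
  ax9b := A.ax9a
  ax10b := A.ax10a
  ax11b := A.ax11a
  ax12 := fun x => (A.ax12 x).symm

variable (A : DBA D)

lemma meet_idem (x y : D) : A.inf (A.inf x y) (A.inf x y) = A.inf x y := by
  calc A.inf (A.inf x y) (A.inf x y) = A.inf (A.inf (A.inf x x) y) y := by ac_rfl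
  _ = A.inf (A.inf x y) y := by rw [A.ax1a]
  _ = A.inf (A.inf y y) x := by ac_rfl
  _ = A.inf y x := by rw [A.ax1a]
  _ = A.inf x y := A.ax2a y x

lemma join_idem (x y : D) : A.sup (A.sup x y) (A.sup x y) = A.sup x y :=
  meet_idem (dual A) x y

lemma negneg (x : D) : A.neg (A.neg x) = A.inf x x := by
  have h := A.ax8a x x
  rw [A.ax4a] at h
  exact h

lemma dnegdneg (x : D) : A.dneg (A.dneg x) = A.sup x x := negneg (dual A) x

lemma neg_idem (x : D) : A.inf (A.neg x) (A.neg x) = A.neg x := by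
  calc A.inf (A.neg x) (A.neg x) = A.neg (A.neg (A.neg x)) := (negneg A _).symm
  _ = A.neg (A.inf x x) := by rw [negneg A x]
  _ = A.neg x := A.ax4a x

lemma dneg_idem (x : D) : A.sup (A.dneg x) (A.dneg x) = A.dneg x := neg_idem (dual A) x

lemma bot_inf_any (z : D) : A.inf A.bot z = A.bot := by
  calc A.inf A.bot z = A.inf (A.inf z (A.neg z)) z := by rw [A.ax9a]
  _ = A.inf (A.inf z z) (A.neg z) := by ac_rfl
  _ = A.inf z (A.neg z) := by rw [A.ax1a]
  _ = A.bot := A.ax9a z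

lemma top_sup_any (z : D) : A.sup A.top z = A.top := bot_inf_any (dual A) z

lemma inf_top (z : D) : A.inf z A.top = A.inf z z := by
  rw [← A.ax9b z]; exact A.ax5a z (A.dneg z)

lemma sup_bot (z : D) : A.sup z A.bot = A.sup z z := inf_top (dual A) z

lemma inf_t {b : D} (h : A.inf b b = b) : A.inf b (A.inf A.top A.top) = b := by
  calc A.inf b (A.inf A.top A.top) = A.inf (A.inf b A.top) A.top := A.ax3a ..
  _ = A.inf (A.inf b b) A.top := by rw [inf_top A b]
  _ = A.inf b A.top := by rw [A.ax1a]
  _ = A.inf b b := inf_top A b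
  _ = b := h

lemma sup_t {b : D} (h : A.sup b b = b) : A.sup b (A.sup A.bot A.bot) = b :=
  inf_t (dual A) h

lemma le_of_dle {b c : D} (h : A.inf b c = b) : A.le b c := by
  have hb : A.inf b b = b := by rw [← h]; exact meet_idem A b c
  constructor
  · rw [h, hb]
  · rw [← h, A.ax2b, A.ax2a]; exact A.ax5b c b

lemma le_of_sle {b c : D} (h : A.sup b c = c) : A.le b c := by
  have h2 := le_of_dle (dual A) (show (dual A).inf c b = c by rw [A.ax2b] at h; exact h)
  exact ⟨by rw [A.ax2a]; exact h2.2, by rw [A.ax2b]; exact h2.1⟩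

lemma inf_le_left (x y : D) : A.le (A.inf x y) x :=
  le_of_dle A (by calc A.inf (A.inf x y) x = A.inf (A.inf x x) y := by ac_rfl
    _ = A.inf x y := A.ax1a x y)

lemma inf_le_right (x y : D) : A.le (A.inf x y) y := by
  rw [A.ax2a]; exact inf_le_left A y x

lemma dle_refl {b : D} (h : A.inf b b = b) : A.inf b b = b := h

lemma le_refl (x : D) : A.le x x := ⟨rfl, rfl⟩

lemma le_trans {x y z : D} (h1 : A.le x y) (h2 : A.le y z) : A.le x z := by
  obtain ⟨ha, hb⟩ := h1
  obtain ⟨hc, hd⟩ := h2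
  constructor
  · calc A.inf x z = A.inf (A.inf x x) z := by rw [A.ax1a]
    _ = A.inf (A.inf x y) z := by rw [ha]
    _ = A.inf x (A.inf y z) := (A.ax3a ..).symm
    _ = A.inf x (A.inf y y) := by rw [hc]
    _ = A.inf (A.inf x y) y := A.ax3a ..
    _ = A.inf (A.inf x x) y := by rw [ha]
    _ = A.inf x y := A.ax1a ..
    _ = A.inf x x := ha
  · have e1 : A.sup x (A.sup z z) = A.sup x z := by
      rw [A.ax2b x (A.sup z z), A.ax1b, A.ax2b]
    calc A.sup x z = A.sup x (A.sup z z) := e1.symm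
    _ = A.sup x (A.sup y z) := by rw [hd]
    _ = A.sup (A.sup x y) z := A.ax3b ..
    _ = A.sup (A.sup y y) z := by rw [hb]
    _ = A.sup y z := A.ax1b ..
    _ = A.sup z z := hd

lemma le_top (x : D) : A.le x A.top := by
  constructor
  · exact inf_top A x
  · rw [A.ax2b]; rw [top_sup_any, top_sup_any]

lemma dual_le {x y : D} : (dual A).le x y ↔ A.le y x := by
  constructor
  · rintro ⟨h1, h2⟩
    exact ⟨by rw [A.ax2a]; exact h2, by rw [A.ax2b]; exact h1⟩
  · rintro ⟨h1, h2⟩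
    exact ⟨by show A.sup x y = A.sup x x; rw [A.ax2b]; exact h2,
           by show A.inf x y = A.inf y y; rw [A.ax2a]; exact h1⟩

lemma bot_le (x : D) : A.le A.bot x := (dual_le A).mp (le_top (dual A) x)

lemma dle_m_m {x z : D} (h : A.le x z) :
    A.inf (A.inf x x) (A.inf z z) = A.inf x x := by
  calc A.inf (A.inf x x) (A.inf z z) = A.inf (A.inf (A.inf x x) z) z := A.ax3a ..
  _ = A.inf (A.inf x z) z := by rw [A.ax1a]
  _ = A.inf (A.inf x x) z := by rw [h.1]
  _ = A.inf x z := A.ax1a ..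
  _ = A.inf x x := h.1

lemma sle_s_s {x z : D} (h : A.le x z) :
    A.sup (A.sup x x) (A.sup z z) = A.sup z z := by
  have h2 := dle_m_m (dual A) ((dual_le A).mpr h)
  show A.sup (A.sup x x) (A.sup z z) = A.sup z z
  rw [A.ax2b]
  exact h2

lemma inf_m_m (w w' : D) : A.inf (A.inf w w) (A.inf w' w') = A.inf w w' := by
  calc A.inf (A.inf w w) (A.inf w' w') = A.inf (A.inf (A.inf w w) w') w' := A.ax3a ..
  _ = A.inf (A.inf w w') w' := by rw [A.ax1a]
  _ = A.inf (A.inf w' w') w := by ac_rfl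
  _ = A.inf w' w := A.ax1a ..
  _ = A.inf w w' := A.ax2a ..

lemma sup_s_s (w w' : D) : A.sup (A.sup w w) (A.sup w' w') = A.sup w w' :=
  inf_m_m (dual A) w w'

lemma m_s_of_m {b : D} (hb : A.inf b b = b) :
    A.inf (A.sup b b) (A.sup b b) = A.sup b b := by
  have h12 := A.ax12 b
  rw [hb] at h12
  exact h12.symm

lemma s_m_of_s {b : D} (hb : A.sup b b = b) :
    A.sup (A.inf b b) (A.inf b b) = A.inf b b := m_s_of_m (dual A) hb

lemma inf_vee (x y z : D) : A.inf x (A.vee y z) = A.vee (A.inf x y) (A.inf x z) :=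
  A.ax6a x y z

lemma vee_neg_self (c : D) : A.vee c (A.neg c) = A.inf A.top A.top := by
  show A.neg (A.inf (A.neg c) (A.neg (A.neg c))) = A.inf A.top A.top
  rw [negneg A c]
  have : A.inf (A.neg c) (A.inf c c) = A.bot := by
    calc A.inf (A.neg c) (A.inf c c) = A.inf (A.inf c (A.neg c)) c := by ac_rfl
    _ = A.inf A.bot c := by rw [A.ax9a]
    _ = A.bot := bot_inf_any A c
  rw [this, A.ax10a]

lemma dle_vee_left {b : D} (hb : A.inf b b = b) (c : D) : A.inf b (A.vee b c) = b := by
  have := A.ax7a b c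
  show A.inf b (A.neg (A.inf (A.neg b) (A.neg c))) = b
  rw [this, hb]

lemma vee_dle {p q r : D} (h1 : A.inf p r = p) (h2 : A.inf q r = q) :
    A.inf (A.vee p q) r = A.vee p q := by
  calc A.inf (A.vee p q) r = A.inf r (A.vee p q) := A.ax2a ..
  _ = A.vee (A.inf r p) (A.inf r q) := inf_vee ..
  _ = A.vee p q := by rw [A.ax2a r p, h1, A.ax2a r q, h2]

lemma neg_mem_m (x : D) : A.inf (A.neg x) (A.neg x) = A.neg x := neg_idem A x

lemma dle_trans {b c d : D} (h1 : A.inf b c = b) (h2 : A.inf c d = c) : A.inf b d = b := by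
  calc A.inf b d = A.inf (A.inf b c) d := by rw [h1]
  _ = A.inf b (A.inf c d) := (A.ax3a ..).symm
  _ = A.inf b c := by rw [h2]
  _ = b := h1

/-! ### Primary filter membership lemmas -/

lemma filter_univ_of_bot {F : Set D} (hF : A.IsPrimaryFilter F) (h : A.bot ∈ F) :
    F = Set.univ :=
  Set.eq_univ_of_forall fun z => hF.1.2 _ h z (bot_le A z)

lemma bot_not_mem {F : Set D} (hF : A.IsPrimaryFilter F) : A.bot ∉ F :=
  fun h => hF.2.1 (filter_univ_of_bot A hF h)

lemma top_mem {F : Set D} (hF : A.IsPrimaryFilter F) : A.top ∈ F := by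
  rcases hF.2.2 A.top with h | h
  · exact h
  · rw [A.ax11a] at h
    exact absurd h (bot_not_mem A hF)

lemma mem_neg_iff {F : Set D} (hF : A.IsPrimaryFilter F) (x : D) :
    A.neg x ∈ F ↔ x ∉ F := by
  constructor
  · intro hn hx
    exact bot_not_mem A hF (by rw [← A.ax9a x]; exact hF.1.1 _ hx _ hn)
  · intro hx
    exact (hF.2.2 x).resolve_left hx

lemma mem_m_iff {F : Set D} (hF : A.IsPrimaryFilter F) (x : D) :
    A.inf x x ∈ F ↔ x ∈ F :=
  ⟨fun h => hF.1.2 _ h x (inf_le_left A x x), fun h => hF.1.1 _ h _ h⟩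

lemma mem_inf_iff {F : Set D} (hF : A.IsPrimaryFilter F) (x y : D) :
    A.inf x y ∈ F ↔ x ∈ F ∧ y ∈ F := by
  constructor
  · intro h
    have hx : x ∈ F := by
      by_contra hx
      have hn : A.neg x ∈ F := (mem_neg_iff A hF x).mpr hx
      have hb : A.inf (A.inf x y) (A.neg x) = A.bot := by
        calc A.inf (A.inf x y) (A.neg x) = A.inf (A.inf x (A.neg x)) y := by ac_rfl
        _ = A.inf A.bot y := by rw [A.ax9a]
        _ = A.bot := bot_inf_any A y
      exact bot_not_mem A hF (hb ▸ hF.1.1 _ h _ hn)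
    have hy : y ∈ F := by
      by_contra hy
      have hn : A.neg y ∈ F := (mem_neg_iff A hF y).mpr hy
      have hb : A.inf (A.inf x y) (A.neg y) = A.bot := by
        calc A.inf (A.inf x y) (A.neg y) = A.inf (A.inf y (A.neg y)) x := by ac_rfl
        _ = A.inf A.bot x := by rw [A.ax9a]
        _ = A.bot := bot_inf_any A x
      exact bot_not_mem A hF (hb ▸ hF.1.1 _ h _ hn)
    exact ⟨hx, hy⟩
  · rintro ⟨hx, hy⟩
    exact hF.1.1 _ hx _ hy

lemma mem_vee_iff {F : Set D} (hF : A.IsPrimaryFilter F) (x y : D) :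
    A.vee x y ∈ F ↔ x ∈ F ∨ y ∈ F := by
  show A.neg (A.inf (A.neg x) (A.neg y)) ∈ F ↔ _
  rw [mem_neg_iff A hF, mem_inf_iff A hF, mem_neg_iff A hF, mem_neg_iff A hF]
  tauto

/-! ### Duality for filters and ideals -/

lemma isPrimaryFilter_dual_iff {S : Set D} :
    (dual A).IsPrimaryFilter S ↔ A.IsPrimaryIdeal S := by
  constructor
  · rintro ⟨⟨h1, h2⟩, h3, h4⟩
    exact ⟨⟨h1, fun x hx z hz => h2 x hx z ((dual_le A).mpr hz)⟩, h3, h4⟩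
  · rintro ⟨⟨h1, h2⟩, h3, h4⟩
    exact ⟨⟨h1, fun x hx z hz => h2 x hx z ((dual_le A).mp hz)⟩, h3, h4⟩

lemma isPrimaryIdeal_dual_iff {S : Set D} :
    (dual A).IsPrimaryIdeal S ↔ A.IsPrimaryFilter S := by
  constructor
  · rintro ⟨⟨h1, h2⟩, h3, h4⟩
    exact ⟨⟨h1, fun x hx z hz => h2 x hx z ((dual_le A).mpr hz)⟩, h3, h4⟩
  · rintro ⟨⟨h1, h2⟩, h3, h4⟩
    exact ⟨⟨h1, fun x hx z hz => h2 x hx z ((dual_le A).mp hz)⟩, h3, h4⟩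

/-! ### Primary ideal membership lemmas (by duality) -/

lemma ideal_univ_of_top {I : Set D} (hI : A.IsPrimaryIdeal I) (h : A.top ∈ I) :
    I = Set.univ :=
  filter_univ_of_bot (dual A) ((isPrimaryFilter_dual_iff A).mpr hI) h

lemma top_not_mem_ideal {I : Set D} (hI : A.IsPrimaryIdeal I) : A.top ∉ I :=
  bot_not_mem (dual A) ((isPrimaryFilter_dual_iff A).mpr hI)

lemma bot_mem_ideal {I : Set D} (hI : A.IsPrimaryIdeal I) : A.bot ∈ I :=
  top_mem (dual A) ((isPrimaryFilter_dual_iff A).mpr hI)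

lemma mem_dneg_iff {I : Set D} (hI : A.IsPrimaryIdeal I) (x : D) :
    A.dneg x ∈ I ↔ x ∉ I :=
  mem_neg_iff (dual A) ((isPrimaryFilter_dual_iff A).mpr hI) x

lemma mem_s_iff {I : Set D} (hI : A.IsPrimaryIdeal I) (x : D) :
    A.sup x x ∈ I ↔ x ∈ I :=
  mem_m_iff (dual A) ((isPrimaryFilter_dual_iff A).mpr hI) x

lemma mem_sup_iff {I : Set D} (hI : A.IsPrimaryIdeal I) (x y : D) :
    A.sup x y ∈ I ↔ x ∈ I ∧ y ∈ I :=
  mem_inf_iff (dual A) ((isPrimaryFilter_dual_iff A).mpr hI) x y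

/-! ### Zorn's lemma: ultrafilters of the Boolean algebra D_⊓ -/

lemma exists_ultra (S T : Set D)
    (hSm : ∀ b ∈ S, A.inf b b = b)
    (hSinf : ∀ b ∈ S, ∀ c ∈ S, A.inf b c ∈ S)
    (htS : A.inf A.top A.top ∈ S)
    (hTm : ∀ p ∈ T, A.inf p p = p)
    (hTdir : ∀ p ∈ T, ∀ q ∈ T, ∃ r ∈ T, A.inf p r = p ∧ A.inf q r = q)
    (hTne : T.Nonempty)
    (compat : ∀ b ∈ S, ∀ p ∈ T, A.inf b p ≠ b) :
    ∃ M : Set D, S ⊆ M ∧ (∀ b ∈ M, A.inf b b = b) ∧ (∀ b ∈ M, ∀ c ∈ M, A.inf b c ∈ M) ∧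
      (∀ b ∈ M, ∀ c, A.inf c c = c → A.inf b c = b → c ∈ M) ∧
      (∀ b ∈ M, ∀ p ∈ T, A.inf b p ≠ b) ∧
      (∀ c, A.inf c c = c → c ∈ M ∨ A.neg c ∈ M) := by
  set P : Set (Set D) := {P | S ⊆ P ∧ (∀ b ∈ P, A.inf b b = b) ∧
      (∀ b ∈ P, ∀ c ∈ P, A.inf b c ∈ P) ∧ ∀ b ∈ P, ∀ p ∈ T, A.inf b p ≠ b} with hPdef
  have hSP : S ∈ P := ⟨subset_rfl, hSm, hSinf, compat⟩
  have hchain : ∀ c ⊆ P, IsChain (· ⊆ ·) c → c.Nonempty → ∃ ub ∈ P, ∀ s ∈ c, s ⊆ ub := by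
    intro c hc hchain ⟨P0, hP0⟩
    refine ⟨⋃₀ c, ⟨?_, ?_, ?_, ?_⟩, fun s hs => Set.subset_sUnion_of_mem hs⟩
    · exact (hc hP0).1.trans (Set.subset_sUnion_of_mem hP0)
    · rintro b ⟨Q, hQ, hb⟩
      exact (hc hQ).2.1 b hb
    · rintro b ⟨Q, hQ, hb⟩ d ⟨R, hR, hd⟩
      rcases hchain.total hQ hR with h | h
      · exact Set.subset_sUnion_of_mem hR ((hc hR).2.2.1 b (h hb) d hd)
      · exact Set.subset_sUnion_of_mem hQ ((hc hQ).2.2.1 b hb d (h hd))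
    · rintro b ⟨Q, hQ, hb⟩ p hp
      exact (hc hQ).2.2.2 b hb p hp
  obtain ⟨M, hSM, hMmax⟩ := zorn_subset_nonempty P hchain S hSP
  have hMP : M ∈ P := hMmax.1
  obtain ⟨hSM', hMm, hMinf, hMavoid⟩ := hMP
  have htM : A.inf A.top A.top ∈ M := hSM htS
  -- upward closure of M
  have hMup : ∀ b ∈ M, ∀ c, A.inf c c = c → A.inf b c = b → c ∈ M := by
    intro b hb c hcm hbc
    set M' : Set D := {x | A.inf x x = x ∧ ∃ mm ∈ M, A.inf mm x = mm} with hM'def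
    have hMM' : M ⊆ M' := fun x hx => ⟨hMm x hx, x, hx, hMm x hx⟩
    have hM'P : M' ∈ P := by
      refine ⟨hSM'.trans hMM', fun x hx => hx.1, ?_, ?_⟩
      · rintro x ⟨hx, mm, hmm, hmx⟩ y ⟨hy, nn, hnn, hny⟩
        refine ⟨meet_idem A x y, A.inf mm nn, hMinf mm hmm nn hnn, ?_⟩
        calc A.inf (A.inf mm nn) (A.inf x y) = A.inf (A.inf mm x) (A.inf nn y) := by ac_rfl
        _ = A.inf mm nn := by rw [hmx, hny]
      · rintro x ⟨hx, mm, hmm, hmx⟩ p hp hxp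
        exact hMavoid mm hmm p hp (by
          calc A.inf mm p = A.inf (A.inf mm x) p := by rw [hmx]
          _ = A.inf mm (A.inf x p) := (A.ax3a ..).symm
          _ = A.inf mm x := by rw [hxp]
          _ = mm := hmx)
    have : M' = M := le_antisymm (hMmax.2 hM'P hMM') hMM'
    rw [← this]
    exact ⟨hcm, b, hb, hbc⟩
  -- primality
  have hMprime : ∀ c, A.inf c c = c → c ∈ M ∨ A.neg c ∈ M := by
    intro c hcm
    by_contra hcon
    push_neg at hcon
    obtain ⟨hc1, hc2⟩ := hcon
    -- generic step: adjoining d to M forces a violation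
    have step : ∀ d, A.inf d d = d → d ∉ M →
        ∃ mm ∈ M, ∃ p ∈ T, A.inf (A.inf mm d) p = A.inf mm d := by
      intro d hdm hdM
      set Md : Set D := {x | A.inf x x = x ∧ ∃ mm ∈ M, A.inf (A.inf mm d) x = A.inf mm d}
        with hMddef
      have hMMd : M ⊆ Md := by
        intro x hx
        refine ⟨hMm x hx, x, hx, ?_⟩
        calc A.inf (A.inf x d) x = A.inf (A.inf x x) d := by ac_rfl
        _ = A.inf x d := by rw [hMm x hx]
      have hdMd : d ∈ Md := by
        refine ⟨hdm, A.inf A.top A.top, htM, ?_⟩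
        calc A.inf (A.inf (A.inf A.top A.top) d) d
            = A.inf (A.inf A.top A.top) (A.inf d d) := (A.ax3a ..).symm
        _ = A.inf (A.inf A.top A.top) d := by rw [hdm]
      by_cases havoid : ∀ b ∈ Md, ∀ p ∈ T, A.inf b p ≠ b
      · exfalso
        have hMdP : Md ∈ P := by
          refine ⟨hSM'.trans hMMd, fun x hx => hx.1, ?_, havoid⟩
          rintro x ⟨hx, mm, hmm, hmx⟩ y ⟨hy, nn, hnn, hny⟩
          refine ⟨meet_idem A x y, A.inf mm nn, hMinf mm hmm nn hnn, ?_⟩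
          have start : A.inf (A.inf (A.inf mm nn) d) (A.inf x y)
              = A.inf (A.inf (A.inf mm nn) (A.inf d d)) (A.inf x y) := by rw [hdm]
          calc A.inf (A.inf (A.inf mm nn) d) (A.inf x y)
              = A.inf (A.inf (A.inf mm nn) (A.inf d d)) (A.inf x y) := start
          _ = A.inf (A.inf (A.inf mm d) x) (A.inf (A.inf nn d) y) := by ac_rfl
          _ = A.inf (A.inf mm d) (A.inf (A.inf nn d) y) := by rw [hmx]
          _ = A.inf (A.inf mm d) (A.inf nn d) := by rw [hny]
          _ = A.inf (A.inf mm nn) (A.inf d d) := by ac_rfl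
          _ = A.inf (A.inf mm nn) d := by rw [hdm]
        have : Md = M := le_antisymm (hMmax.2 hMdP hMMd) hMMd
        exact hdM (this ▸ hdMd)
      · push_neg at havoid
        obtain ⟨x, ⟨hx, mm, hmm, hmx⟩, p, hp, hxp⟩ := havoid
        refine ⟨mm, hmm, p, hp, ?_⟩
        calc A.inf (A.inf mm d) p = A.inf (A.inf (A.inf mm d) x) p := by rw [hmx]
        _ = A.inf (A.inf mm d) (A.inf x p) := (A.ax3a ..).symm
        _ = A.inf (A.inf mm d) x := by rw [hxp]
        _ = A.inf mm d := hmx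
    obtain ⟨mm, hmm, p, hp, hmp⟩ := step c hcm hc1
    obtain ⟨nn, hnn, q, hq, hnq⟩ := step (A.neg c) (neg_idem A c) hc2
    obtain ⟨r, hr, hpr, hqr⟩ := hTdir p hp q hq
    set e := A.inf mm nn with hedef
    have he : e ∈ M := hMinf mm hmm nn hnn
    have key1 : A.inf (A.inf (A.inf mm c) p) r = A.inf (A.inf mm c) p := by
      calc A.inf (A.inf (A.inf mm c) p) r = A.inf (A.inf mm c) (A.inf p r) :=
            (A.ax3a ..).symm
      _ = A.inf (A.inf mm c) p := by rw [hpr]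
    have key2 : A.inf (A.inf (A.inf nn (A.neg c)) q) r = A.inf (A.inf nn (A.neg c)) q := by
      calc A.inf (A.inf (A.inf nn (A.neg c)) q) r
          = A.inf (A.inf nn (A.neg c)) (A.inf q r) := (A.ax3a ..).symm
      _ = A.inf (A.inf nn (A.neg c)) q := by rw [hqr]
    have h1 : A.inf (A.inf e c) r = A.inf e c := by
      calc A.inf (A.inf e c) r = A.inf nn (A.inf (A.inf (A.inf mm c) p) r) := by
            rw [hedef, hmp]; ac_rfl
      _ = A.inf nn (A.inf (A.inf mm c) p) := by rw [key1]
      _ = A.inf e c := by rw [hedef, hmp]; ac_rfl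
    have h2 : A.inf (A.inf e (A.neg c)) r = A.inf e (A.neg c) := by
      calc A.inf (A.inf e (A.neg c)) r
          = A.inf mm (A.inf (A.inf (A.inf nn (A.neg c)) q) r) := by rw [hedef, hnq]; ac_rfl
      _ = A.inf mm (A.inf (A.inf nn (A.neg c)) q) := by rw [key2]
      _ = A.inf e (A.neg c) := by rw [hedef, hnq]; ac_rfl
    have hsplit : A.inf e r = e := by
      have hveer : A.inf (A.vee (A.inf e c) (A.inf e (A.neg c))) r
          = A.vee (A.inf e c) (A.inf e (A.neg c)) := vee_dle A h1 h2
      have hee : A.inf e e = e := by rw [hedef]; exact meet_idem A mm nn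
      calc A.inf e r = A.inf (A.inf e (A.inf A.top A.top)) r := by rw [inf_t A hee]
      _ = A.inf (A.inf e (A.vee c (A.neg c))) r := by rw [vee_neg_self]
      _ = A.inf (A.vee (A.inf e c) (A.inf e (A.neg c))) r := by rw [inf_vee]
      _ = A.vee (A.inf e c) (A.inf e (A.neg c)) := hveer
      _ = A.inf e (A.vee c (A.neg c)) := (inf_vee ..).symm
      _ = A.inf e (A.inf A.top A.top) := by rw [vee_neg_self]
      _ = e := inf_t A hee
    exact hMavoid e he r hr hsplit
  exact ⟨M, hSM, hMm, hMinf, hMup, hMavoid, hMprime⟩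

/-- The primary filter associated with a ⊓-ultrafilter. -/
lemma primaryFilter_of_ultra (M : Set D) (T : Set D) (hTne : T.Nonempty)
    (hMm : ∀ b ∈ M, A.inf b b = b) (hMinf : ∀ b ∈ M, ∀ c ∈ M, A.inf b c ∈ M)
    (hMup : ∀ b ∈ M, ∀ c, A.inf c c = c → A.inf b c = b → c ∈ M)
    (hMavoid : ∀ b ∈ M, ∀ p ∈ T, A.inf b p ≠ b)
    (hMprime : ∀ c, A.inf c c = c → c ∈ M ∨ A.neg c ∈ M) :
    A.IsPrimaryFilter {x | A.inf x x ∈ M} := by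
  have hbot : A.bot ∉ {x | A.inf x x ∈ M} := by
    intro hb
    obtain ⟨p, hp⟩ := hTne
    have hbb : A.inf A.bot A.bot = A.bot := bot_inf_any A A.bot
    have hb2 : A.inf A.bot A.bot ∈ M := hb
    rw [hbb] at hb2
    exact hMavoid A.bot hb2 p hp (bot_inf_any A p)
  refine ⟨⟨?_, ?_⟩, ?_, ?_⟩
  · intro x hx y hy
    show A.inf (A.inf x y) (A.inf x y) ∈ M
    rw [meet_idem, ← inf_m_m]
    exact hMinf _ hx _ hy
  · intro x hx z hz
    exact hMup _ hx _ (meet_idem A z z) (dle_m_m A hz)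
  · intro hu
    exact hbot (hu ▸ Set.mem_univ A.bot)
  · intro x
    rcases hMprime (A.inf x x) (meet_idem A x x) with h | h
    · exact Or.inl h
    · right
      show A.inf (A.neg x) (A.neg x) ∈ M
      rw [neg_idem A x]
      rw [A.ax4a] at h
      exact h
  
lemma ext_filter {I : Set D} (hI : A.IsPrimaryIdeal I) (a : D) (ha : A.inf a a = a)
    (haI : a ∉ I) :
    ∃ F : Set D, A.IsPrimaryFilter F ∧ a ∈ F ∧ F ∩ I = ∅ := by
  set t := A.inf A.top A.top with htdef
  have ht : A.inf t t = t := meet_idem A A.top A.top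
  set S : Set D := {b | b = a ∨ b = t} with hSdef
  set T : Set D := {p | ∃ z ∈ I, p = A.inf z z} with hTdef
  have hat : A.inf a t = a := inf_t A ha
  have hdown : ∀ b, ∀ z ∈ I, A.inf b (A.inf z z) = b → b ∈ I := by
    intro b z hz hb
    have h1 : A.le b (A.inf z z) := le_of_dle A hb
    have h2 : A.le (A.inf z z) z := inf_le_left A z z
    exact hI.1.2 z hz b (le_trans A h1 h2)
  have compat : ∀ b ∈ S, ∀ p ∈ T, A.inf b p ≠ b := by
    rintro b hb p ⟨z, hz, rfl⟩ hbp
    have hbI : b ∈ I := hdown b z hz hbp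
    rcases hb with rfl | rfl
    · exact haI hbI
    · exact haI (hdown a t hbI (by rw [ht]; exact hat))
  obtain ⟨M, hSM, hMm, hMinf, hMup, hMavoid, hMprime⟩ := exists_ultra A S T
    (by rintro b (rfl | rfl); exacts [ha, ht])
    (by rintro b (rfl | rfl) c (rfl | rfl) <;> simp only [hSdef, Set.mem_setOf_eq]
        · exact Or.inl ha
        · exact Or.inl hat
        · exact Or.inl (by rw [A.ax2a]; exact hat)
        · exact Or.inr ht)
    (Or.inr rfl)
    (by rintro p ⟨z, hz, rfl⟩; exact meet_idem A z z)
    (by rintro p ⟨z, hz, rfl⟩ q ⟨w, hw, rfl⟩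
        refine ⟨A.inf (A.sup z w) (A.sup z w), ⟨A.sup z w, hI.1.1 z hz w hw, rfl⟩, ?_, ?_⟩
        · calc A.inf (A.inf z z) (A.inf (A.sup z w) (A.sup z w))
              = A.inf (A.inf z (A.sup z w)) (A.inf z (A.sup z w)) := by ac_rfl
          _ = A.inf (A.inf z z) (A.inf z z) := by rw [A.ax5a]
          _ = A.inf z z := meet_idem ..
        · calc A.inf (A.inf w w) (A.inf (A.sup z w) (A.sup z w))
              = A.inf (A.inf w (A.sup w z)) (A.inf w (A.sup w z)) := by
                rw [A.ax2b w z]; ac_rfl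
          _ = A.inf (A.inf w w) (A.inf w w) := by rw [A.ax5a]
          _ = A.inf w w := meet_idem ..)
    ⟨A.inf A.bot A.bot, A.bot, bot_mem_ideal A hI, rfl⟩
    compat
  refine ⟨{x | A.inf x x ∈ M},
    primaryFilter_of_ultra A M T ⟨A.inf A.bot A.bot, A.bot, bot_mem_ideal A hI, rfl⟩
      hMm hMinf hMup hMavoid hMprime, ?_, ?_⟩
  · show A.inf a a ∈ M
    rw [ha]
    exact hSM (Or.inl rfl)
  · ext z
    simp only [Set.mem_inter_iff, Set.mem_setOf_eq, Set.mem_empty_iff_false, iff_false,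
      not_and]
    intro hzM hzI
    exact hMavoid _ hzM (A.inf z z) ⟨z, hzI, rfl⟩ (meet_idem A z z)

lemma ext_ideal {F : Set D} (hF : A.IsPrimaryFilter F) (b : D) (hb : A.sup b b = b)
    (hbF : b ∉ F) :
    ∃ I : Set D, A.IsPrimaryIdeal I ∧ b ∈ I ∧ F ∩ I = ∅ := by
  obtain ⟨I, hI, hbI, hIF⟩ := ext_filter (dual A)
    (show (dual A).IsPrimaryIdeal F from (isPrimaryIdeal_dual_iff A).mpr hF) b hb hbF
  exact ⟨I, (isPrimaryFilter_dual_iff A).mp hI, hbI, by rwa [Set.inter_comm]⟩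

/-- Separation: primary filters separate elements of D_⊓. -/
lemma m_eq_of_filters {x y : D}
    (h : ∀ F : Set D, A.IsPrimaryFilter F → (x ∈ F ↔ y ∈ F)) :
    A.inf x x = A.inf y y := by
  set t := A.inf A.top A.top with htdef
  have ht : A.inf t t = t := meet_idem A A.top A.top
  have sep : ∀ u v : D, A.inf u u = u → A.inf v v = v → A.inf u v ≠ u →
      ∃ F : Set D, A.IsPrimaryFilter F ∧ u ∈ F ∧ v ∉ F := by
    intro u v hu hv huv
    have hut : A.inf u t = u := inf_t A hu
    set S : Set D := {b | b = u ∨ b = t} with hSdef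
    have compat : ∀ b ∈ S, ∀ p ∈ ({v} : Set D), A.inf b p ≠ b := by
      rintro b hb p hp hbp
      rw [Set.mem_singleton_iff] at hp
      rw [hp] at hbp
      rcases hb with rfl | rfl
      · exact huv hbp
      · -- t ⊓ v = t implies u ⊓ v = u
        apply huv
        calc A.inf u v = A.inf (A.inf u t) v := by rw [hut]
        _ = A.inf u (A.inf t v) := (A.ax3a ..).symm
        _ = A.inf u t := by rw [hbp]
        _ = u := hut
    obtain ⟨M, hSM, hMm, hMinf, hMup, hMavoid, hMprime⟩ := exists_ultra A S {v}
      (by rintro b (rfl | rfl); exacts [hu, ht])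
      (by rintro b (rfl | rfl) c (rfl | rfl) <;> simp only [hSdef, Set.mem_setOf_eq]
          · exact Or.inl hu
          · exact Or.inl hut
          · exact Or.inl (by rw [A.ax2a]; exact hut)
          · exact Or.inr ht)
      (Or.inr rfl)
      (by rintro p hp; rw [Set.mem_singleton_iff] at hp; rw [hp]; exact hv)
      (by rintro p hp q hq
          rw [Set.mem_singleton_iff] at hp hq; rw [hp, hq]
          exact ⟨v, rfl, hv, hv⟩)
      ⟨v, rfl⟩
      compat
    refine ⟨{x | A.inf x x ∈ M}, primaryFilter_of_ultra A M {v} ⟨v, rfl⟩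
      hMm hMinf hMup hMavoid hMprime, ?_, ?_⟩
    · show A.inf u u ∈ M
      rw [hu]; exact hSM (Or.inl rfl)
    · show A.inf v v ∉ M
      rw [hv]
      intro hvM
      exact hMavoid v hvM v rfl hv
  by_cases h1 : A.inf (A.inf x x) (A.inf y y) = A.inf x x
  · by_cases h2 : A.inf (A.inf y y) (A.inf x x) = A.inf y y
    · rw [← h1, A.ax2a, h2]
    · obtain ⟨F, hF, hyF, hxF⟩ := sep (A.inf y y) (A.inf x x)
        (meet_idem A y y) (meet_idem A x x) h2
      rw [mem_m_iff A hF] at hyF hxF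
      exact absurd ((h F hF).mpr hyF) hxF
  · obtain ⟨F, hF, hxF, hyF⟩ := sep (A.inf x x) (A.inf y y)
      (meet_idem A x x) (meet_idem A y y) h1
    rw [mem_m_iff A hF] at hyF hxF
    exact absurd ((h F hF).mp hxF) hyF

lemma s_eq_of_ideals {x y : D}
    (h : ∀ I : Set D, A.IsPrimaryIdeal I → (x ∈ I ↔ y ∈ I)) :
    A.sup x x = A.sup y y :=
  m_eq_of_filters (dual A) fun F hF => h F ((isPrimaryFilter_dual_iff A).mp hF)

end DBA

/-! ### The Stone-type duality lemmas -/

section KeyLemmas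

open DBA

variable {D : Type u} (A : DBA D)

lemma Fset_neg (x : D) : Fset A (A.neg x) = (Fset A x)ᶜ := by
  ext F
  exact mem_neg_iff A F.2 x

lemma Iset_dneg (x : D) : Iset A (A.dneg x) = (Iset A x)ᶜ := by
  ext I
  exact mem_dneg_iff A I.2 x

lemma Fset_inf (x y : D) : Fset A (A.inf x y) = Fset A x ∩ Fset A y := by
  ext F
  exact mem_inf_iff A F.2 x y

lemma Iset_sup (x y : D) : Iset A (A.sup x y) = Iset A x ∩ Iset A y := by
  ext I
  exact mem_sup_iff A I.2 x y

lemma Fset_m (x : D) : Fset A (A.inf x x) = Fset A x := by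
  ext F
  exact mem_m_iff A F.2 x

lemma Iset_s (x : D) : Iset A (A.sup x x) = Iset A x := by
  ext I
  exact mem_s_iff A I.2 x

lemma Fset_vee (x y : D) : Fset A (A.vee x y) = Fset A x ∪ Fset A y := by
  ext F
  exact mem_vee_iff A F.2 x y

lemma Fset_bot : Fset A A.bot = ∅ := by
  ext F
  simp only [Set.mem_empty_iff_false, iff_false]
  exact bot_not_mem A F.2

lemma Iset_top : Iset A A.top = ∅ := by
  ext I
  simp only [Set.mem_empty_iff_false, iff_false]
  exact top_not_mem_ideal A I.2

lemma Fset_top : Fset A A.top = Set.univ := by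
  ext F
  simp only [Set.mem_univ, iff_true]
  exact top_mem A F.2

lemma Iset_bot : Iset A A.bot = Set.univ := by
  ext I
  simp only [Set.mem_univ, iff_true]
  exact bot_mem_ideal A I.2

/-- Key duality lemma (⊓-side): for a ∈ D_⊓, (F_{¬a})^■ = I_a. -/
lemma obbox_Fset_neg (a : D) (ha : A.inf a a = a) :
    obbox (nabla A) (Fset A (A.neg a)) = Iset A a := by
  ext I
  simp only [obbox, Set.mem_setOf_eq]
  constructor
  · intro hI
    by_contra haI
    obtain ⟨F0, hF0, haF, hFI⟩ := ext_filter A I.2 a ha haI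
    have hmem : (⟨F0, hF0⟩ : PrimF A) ∈ Fset A (A.neg a) := hI ⟨F0, hF0⟩ hFI
    have : a ∉ F0 := (mem_neg_iff A hF0 a).mp hmem
    exact this haF
  · intro haI F hnab
    show A.neg a ∈ F.val
    rw [mem_neg_iff A F.2]
    intro haF
    have : a ∈ F.val ∩ I.val := ⟨haF, haI⟩
    rw [hnab] at this
    exact this

/-- Key duality lemma (⊔-side): for b ∈ D_⊔, (I_b)^◇ = F_{¬b}. -/
lemma odia_Iset (b : D) (hb : A.sup b b = b) :
    odia (nabla A) (Iset A b) = Fset A (A.neg b) := by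
  ext F
  simp only [odia, Set.mem_setOf_eq]
  constructor
  · rintro ⟨I, hbI, hnab⟩
    show A.neg b ∈ F.val
    rw [mem_neg_iff A F.2]
    intro hbF
    have : b ∈ F.val ∩ I.val := ⟨hbF, hbI⟩
    rw [hnab] at this
    exact this
  · intro hF
    have hbF : b ∉ F.val := (mem_neg_iff A F.2 b).mp hF
    obtain ⟨I0, hI0, hbI, hFI⟩ := ext_ideal A F.2 b hb hbF
    exact ⟨⟨I0, hI0⟩, hbI, hFI⟩

/-! ### The homomorphism equations -/

lemma protoEmb_inf (x y : D) :
    protoEmb A (A.inf x y) = pinf (nabla A) (protoEmb A x) (protoEmb A y) := by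
  have h1 : Fset A (A.neg (A.inf x y)) = Fset A (A.neg x) ∪ Fset A (A.neg y) := by
    rw [Fset_neg, Fset_neg, Fset_neg, Fset_inf, Set.compl_inter]
  refine Prod.ext h1 ?_
  show Iset A (A.inf x y) = obbox (nabla A) (Fset A (A.neg x) ∪ Fset A (A.neg y))
  rw [← h1, obbox_Fset_neg A _ (DBA.meet_idem A x y)]

lemma protoEmb_sup (x y : D) :
    protoEmb A (A.sup x y) = psup (nabla A) (protoEmb A x) (protoEmb A y) := by
  have h2 : Iset A (A.sup x y) = Iset A x ∩ Iset A y := Iset_sup A x y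
  refine Prod.ext ?_ h2
  show Fset A (A.neg (A.sup x y)) = odia (nabla A) (Iset A x ∩ Iset A y)
  rw [← h2, odia_Iset A _ (DBA.join_idem A x y)]

lemma protoEmb_neg (x : D) :
    protoEmb A (A.neg x) = pneg (nabla A) (protoEmb A x) := by
  have h1 : Fset A (A.neg (A.neg x)) = (Fset A (A.neg x))ᶜ := Fset_neg A (A.neg x)
  refine Prod.ext h1 ?_
  show Iset A (A.neg x) = obbox (nabla A) (Fset A (A.neg x))ᶜ
  rw [← h1, obbox_Fset_neg A _ (DBA.neg_idem A x)]

lemma protoEmb_dneg (x : D) :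
    protoEmb A (A.dneg x) = pdneg (nabla A) (protoEmb A x) := by
  have h2 : Iset A (A.dneg x) = (Iset A x)ᶜ := Iset_dneg A x
  refine Prod.ext ?_ h2
  show Fset A (A.neg (A.dneg x)) = odia (nabla A) (Iset A x)ᶜ
  rw [← h2, odia_Iset A _ (DBA.dneg_idem A x)]

lemma protoEmb_top : protoEmb A A.top = ptop := by
  refine Prod.ext ?_ ?_
  · show Fset A (A.neg A.top) = ∅
    rw [A.ax11a, Fset_bot]
  · exact Iset_top A

lemma protoEmb_bot : protoEmb A A.bot = pbot := by
  refine Prod.ext ?_ ?_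
  · show Fset A (A.neg A.bot) = Set.univ
    rw [A.ax10a, Fset_m, Fset_top]
  · exact Iset_bot A

end KeyLemmas

/-! ### Topology: clopen sets of the dual spaces -/

section TopologyLemmas

open DBA

variable {D : Type u} (A : DBA D)

lemma mem_wedge_iff_ideal {I : Set D} (hI : A.IsPrimaryIdeal I) (x y : D) :
    A.wedge x y ∈ I ↔ x ∈ I ∨ y ∈ I :=
  mem_vee_iff (dual A) ((isPrimaryFilter_dual_iff A).mpr hI) x y

lemma Iset_wedge (x y : D) : Iset A (A.wedge x y) = Iset A x ∪ Iset A y := by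
  ext I
  exact mem_wedge_iff_ideal A I.2 x y

lemma filtTop_open_basis {U : Set (PrimF A)}
    (hU : TopologicalSpace.GenerateOpen {U | ∃ x : D, U = (Fset A x)ᶜ} U) :
    ∀ F ∈ U, ∃ z : D, F ∉ Fset A z ∧ (Fset A z)ᶜ ⊆ U := by
  induction hU with
  | basic V hV =>
    obtain ⟨z, rfl⟩ := hV
    exact fun F hF => ⟨z, hF, subset_rfl⟩
  | univ =>
    intro F _
    refine ⟨A.bot, ?_, fun _ _ => Set.mem_univ _⟩
    rw [Fset_bot]
    exact Set.notMem_empty F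
  | inter U V hUo hVo ihU ihV =>
    intro F hF
    obtain ⟨z1, h1, hs1⟩ := ihU F hF.1
    obtain ⟨z2, h2, hs2⟩ := ihV F hF.2
    refine ⟨A.vee z1 z2, ?_, ?_⟩
    · rw [Fset_vee]
      rintro (h | h)
      exacts [h1 h, h2 h]
    · rw [Fset_vee, Set.compl_union]
      exact fun G hG => ⟨hs1 hG.1, hs2 hG.2⟩
  | sUnion S hS ih =>
    rintro F ⟨U0, hU0, hFU0⟩
    obtain ⟨z, h1, h2⟩ := ih U0 hU0 F hFU0
    exact ⟨z, h1, h2.trans (Set.subset_sUnion_of_mem hU0)⟩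

lemma idlTop_open_basis {U : Set (PrimI A)}
    (hU : TopologicalSpace.GenerateOpen {U | ∃ x : D, U = (Iset A x)ᶜ} U) :
    ∀ I ∈ U, ∃ z : D, I ∉ Iset A z ∧ (Iset A z)ᶜ ⊆ U := by
  induction hU with
  | basic V hV =>
    obtain ⟨z, rfl⟩ := hV
    exact fun I hI => ⟨z, hI, subset_rfl⟩
  | univ =>
    intro I _
    refine ⟨A.top, ?_, fun _ _ => Set.mem_univ _⟩
    rw [Iset_top]
    exact Set.notMem_empty I
  | inter U V hUo hVo ihU ihV =>
    intro I hI
    obtain ⟨z1, h1, hs1⟩ := ihU I hI.1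
    obtain ⟨z2, h2, hs2⟩ := ihV I hI.2
    refine ⟨A.wedge z1 z2, ?_, ?_⟩
    · rw [Iset_wedge]
      rintro (h | h)
      exacts [h1 h, h2 h]
    · rw [Iset_wedge, Set.compl_union]
      exact fun G hG => ⟨hs1 hG.1, hs2 hG.2⟩
  | sUnion S hS ih =>
    rintro I ⟨U0, hU0, hIU0⟩
    obtain ⟨z, h1, h2⟩ := ih U0 hU0 I hIU0
    exact ⟨z, h1, h2.trans (Set.subset_sUnion_of_mem hU0)⟩

/-- Every clopen subset of the primary filter space is of the form F_u, u ∈ D_⊓. -/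
lemma clopen_filt_eq_Fset (Aset : Set (PrimF A))
    (hclosed : @IsClosed _ (filtTop A) Aset) (hopen : @IsOpen _ (filtTop A) Aset) :
    ∃ u : D, A.inf u u = u ∧ Aset = Fset A u := by
  set W : Set D := {w | Aset ⊆ Fset A w} with hWdef
  set V : Set D := {v | Asetᶜ ⊆ Fset A v} with hVdef
  have hWtop : A.top ∈ W := by rw [hWdef]; intro F _; exact top_mem A F.2
  have hVtop : A.top ∈ V := by rw [hVdef]; intro F _; exact top_mem A F.2
  have hAW : ∀ F : PrimF A, (∀ w ∈ W, F ∈ Fset A w) → F ∈ Aset := by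
    intro F hF
    by_contra hFA
    have hco : TopologicalSpace.GenerateOpen {U | ∃ x : D, U = (Fset A x)ᶜ} Asetᶜ :=
      hclosed.isOpen_compl
    obtain ⟨z, h1, h2⟩ := filtTop_open_basis A hco F hFA
    have hzW : z ∈ W := by
      rw [hWdef]
      intro G hG
      by_contra hGz
      exact (h2 hGz) hG
    exact h1 (hF z hzW)
  have hAV : ∀ F : PrimF A, (∀ v ∈ V, F ∈ Fset A v) → F ∈ Asetᶜ := by
    intro F hF
    by_contra hFA
    rw [Set.notMem_compl_iff] at hFA
    obtain ⟨z, h1, h2⟩ := filtTop_open_basis A hopen F hFA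
    have hzV : z ∈ V := by
      rw [hVdef]
      intro G hG
      by_contra hGz
      exact hG (h2 hGz)
    exact h1 (hF z hzV)
  by_cases hex : ∃ w ∈ W, ∃ v ∈ V, A.inf (A.inf w w) (A.inf v v) = A.bot
  · obtain ⟨w, hw, v, hv, hwv⟩ := hex
    refine ⟨A.inf w w, meet_idem A w w, ?_⟩
    ext F
    constructor
    · intro hF
      show A.inf w w ∈ F.val
      rw [mem_m_iff A F.2]
      exact hw hF
    · intro hF
      by_contra hFA
      have hvF : v ∈ F.val := hv hFA
      have hwF : w ∈ F.val := (mem_m_iff A F.2 w).mp hF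
      have : A.inf (A.inf w w) (A.inf v v) ∈ F.val :=
        F.2.1.1 _ (F.2.1.1 _ hwF _ hwF) _ (F.2.1.1 _ hvF _ hvF)
      rw [hwv] at this
      exact bot_not_mem A F.2 this
  · exfalso
    push_neg at hex
    set S : Set D := {b | ∃ w ∈ W, ∃ v ∈ V, b = A.inf (A.inf w w) (A.inf v v)} with hSdef
    have hWinf : ∀ w ∈ W, ∀ w' ∈ W, A.inf w w' ∈ W := by
      intro w hw w' hw'
      show Aset ⊆ Fset A (A.inf w w')
      rw [Fset_inf]
      exact Set.subset_inter hw hw'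
    have hVinf : ∀ v ∈ V, ∀ v' ∈ V, A.inf v v' ∈ V := by
      intro v hv v' hv'
      show Asetᶜ ⊆ Fset A (A.inf v v')
      rw [Fset_inf]
      exact Set.subset_inter hv hv'
    obtain ⟨M, hSM, hMm, hMinf, hMup, hMavoid, hMprime⟩ := exists_ultra A S {A.bot}
      (by rintro b ⟨w, hw, v, hv, rfl⟩; exact meet_idem ..)
      (by rintro b ⟨w, hw, v, hv, rfl⟩ c ⟨w', hw', v', hv', rfl⟩
          refine ⟨A.inf w w', hWinf w hw w' hw', A.inf v v', hVinf v hv v' hv', ?_⟩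
          calc A.inf (A.inf (A.inf w w) (A.inf v v)) (A.inf (A.inf w' w') (A.inf v' v'))
              = A.inf (A.inf (A.inf w w) (A.inf w' w')) (A.inf (A.inf v v) (A.inf v' v')) := by
                ac_rfl
          _ = A.inf (A.inf w w') (A.inf v v') := by rw [inf_m_m, inf_m_m]
          _ = A.inf (A.inf (A.inf w w') (A.inf w w')) (A.inf (A.inf v v') (A.inf v v')) := by
                rw [meet_idem, meet_idem])
      (⟨A.top, hWtop, A.top, hVtop, (meet_idem A A.top A.top).symm⟩)
      (by rintro p hp; rw [Set.mem_singleton_iff] at hp; rw [hp]; exact bot_inf_any A A.bot)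
      (by rintro p hp q hq; rw [Set.mem_singleton_iff] at hp hq; rw [hp, hq]
          exact ⟨A.bot, rfl, bot_inf_any A A.bot, bot_inf_any A A.bot⟩)
      ⟨A.bot, rfl⟩
      (by rintro b ⟨w, hw, v, hv, rfl⟩ p hp hbp
          rw [Set.mem_singleton_iff] at hp
          rw [hp] at hbp
          have hbb : A.inf (A.inf (A.inf w w) (A.inf v v)) A.bot = A.bot := by
            rw [A.ax2a]; exact bot_inf_any A _
          exact hex w hw v hv (by rw [← hbp, hbb]))
    have hprim : A.IsPrimaryFilter {x | A.inf x x ∈ M} :=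
      primaryFilter_of_ultra A M {A.bot} ⟨A.bot, rfl⟩ hMm hMinf hMup hMavoid hMprime
    set F : PrimF A := ⟨{x | A.inf x x ∈ M}, hprim⟩ with hFdef
    have hmemW : ∀ w ∈ W, F ∈ Fset A w := by
      intro w hw
      show A.inf w w ∈ M
      apply hSM
      exact ⟨w, hw, A.top, hVtop, (inf_t A (meet_idem A w w)).symm⟩
    have hmemV : ∀ v ∈ V, F ∈ Fset A v := by
      intro v hv
      show A.inf v v ∈ M
      apply hSM
      refine ⟨A.top, hWtop, v, hv, ?_⟩
      have hcomm : A.inf (A.inf A.top A.top) (A.inf v v) = A.inf v v := by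
        calc A.inf (A.inf A.top A.top) (A.inf v v)
            = A.inf (A.inf v v) (A.inf A.top A.top) := A.ax2a ..
        _ = A.inf v v := inf_t A (meet_idem A v v)
      exact hcomm.symm
    exact (hAV F hmemV) (hAW F hmemW)

/-- Every clopen subset of the primary ideal space is of the form I_q, q ∈ D_⊔. -/
lemma clopen_idl_eq_Iset (Bset : Set (PrimI A))
    (hclosed : @IsClosed _ (idlTop A) Bset) (hopen : @IsOpen _ (idlTop A) Bset) :
    ∃ q : D, A.sup q q = q ∧ Bset = Iset A q := by
  set W : Set D := {w | Bset ⊆ Iset A w} with hWdef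
  set V : Set D := {v | Bsetᶜ ⊆ Iset A v} with hVdef
  have hWbot : A.bot ∈ W := by rw [hWdef]; intro I _; exact bot_mem_ideal A I.2
  have hVbot : A.bot ∈ V := by rw [hVdef]; intro I _; exact bot_mem_ideal A I.2
  have hAW : ∀ I : PrimI A, (∀ w ∈ W, I ∈ Iset A w) → I ∈ Bset := by
    intro I hI
    by_contra hIB
    have hco : TopologicalSpace.GenerateOpen {U | ∃ x : D, U = (Iset A x)ᶜ} Bsetᶜ :=
      hclosed.isOpen_compl
    obtain ⟨z, h1, h2⟩ := idlTop_open_basis A hco I hIB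
    have hzW : z ∈ W := by
      rw [hWdef]
      intro G hG
      by_contra hGz
      exact (h2 hGz) hG
    exact h1 (hI z hzW)
  have hAV : ∀ I : PrimI A, (∀ v ∈ V, I ∈ Iset A v) → I ∈ Bsetᶜ := by
    intro I hI
    by_contra hIB
    rw [Set.notMem_compl_iff] at hIB
    obtain ⟨z, h1, h2⟩ := idlTop_open_basis A hopen I hIB
    have hzV : z ∈ V := by
      rw [hVdef]
      intro G hG
      by_contra hGz
      exact hG (h2 hGz)
    exact h1 (hI z hzV)
  by_cases hex : ∃ w ∈ W, ∃ v ∈ V, A.sup (A.sup w w) (A.sup v v) = A.top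
  · obtain ⟨w, hw, v, hv, hwv⟩ := hex
    refine ⟨A.sup w w, join_idem A w w, ?_⟩
    ext I
    constructor
    · intro hI
      show A.sup w w ∈ I.val
      rw [mem_s_iff A I.2]
      exact hw hI
    · intro hI
      by_contra hIB
      have hvI : v ∈ I.val := hv hIB
      have hwI : w ∈ I.val := (mem_s_iff A I.2 w).mp hI
      have : A.sup (A.sup w w) (A.sup v v) ∈ I.val :=
        I.2.1.1 _ (I.2.1.1 _ hwI _ hwI) _ (I.2.1.1 _ hvI _ hvI)
      rw [hwv] at this
      exact top_not_mem_ideal A I.2 this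
  · exfalso
    push_neg at hex
    set S : Set D := {b | ∃ w ∈ W, ∃ v ∈ V, b = A.sup (A.sup w w) (A.sup v v)} with hSdef
    have hWsup : ∀ w ∈ W, ∀ w' ∈ W, A.sup w w' ∈ W := by
      intro w hw w' hw'
      show Bset ⊆ Iset A (A.sup w w')
      rw [Iset_sup]
      exact Set.subset_inter hw hw'
    have hVsup : ∀ v ∈ V, ∀ v' ∈ V, A.sup v v' ∈ V := by
      intro v hv v' hv'
      show Bsetᶜ ⊆ Iset A (A.sup v v')
      rw [Iset_sup]
      exact Set.subset_inter hv hv'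
    obtain ⟨M, hSM, hMm, hMinf, hMup, hMavoid, hMprime⟩ :=
      exists_ultra (dual A) S {A.top}
      (by rintro b ⟨w, hw, v, hv, rfl⟩; exact meet_idem (dual A) ..)
      (by rintro b ⟨w, hw, v, hv, rfl⟩ c ⟨w', hw', v', hv', rfl⟩
          refine ⟨A.sup w w', hWsup w hw w' hw', A.sup v v', hVsup v hv v' hv', ?_⟩
          calc A.sup (A.sup (A.sup w w) (A.sup v v)) (A.sup (A.sup w' w') (A.sup v' v'))
              = A.sup (A.sup (A.sup w w) (A.sup w' w')) (A.sup (A.sup v v) (A.sup v' v')) := by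
                ac_rfl
          _ = A.sup (A.sup w w') (A.sup v v') := by
                rw [sup_s_s, sup_s_s]
          _ = A.sup (A.sup (A.sup w w') (A.sup w w')) (A.sup (A.sup v v') (A.sup v v')) := by
                rw [join_idem, join_idem])
      (⟨A.bot, hWbot, A.bot, hVbot, (meet_idem (dual A) A.bot A.bot).symm⟩)
      (by rintro p hp; rw [Set.mem_singleton_iff] at hp; rw [hp]
          exact bot_inf_any (dual A) A.top)
      (by rintro p hp q hq; rw [Set.mem_singleton_iff] at hp hq; rw [hp, hq]
          exact ⟨A.top, rfl, bot_inf_any (dual A) A.top, bot_inf_any (dual A) A.top⟩)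
      ⟨A.top, rfl⟩
      (by rintro b ⟨w, hw, v, hv, rfl⟩ p hp hbp
          rw [Set.mem_singleton_iff] at hp
          rw [hp] at hbp
          have hbp' : A.sup (A.sup (A.sup w w) (A.sup v v)) A.top
              = A.sup (A.sup w w) (A.sup v v) := hbp
          have hbb : A.sup (A.sup (A.sup w w) (A.sup v v)) A.top = A.top := by
            rw [A.ax2b]; exact top_sup_any A _
          exact hex w hw v hv (by rw [← hbp', hbb]))
    have hprim : A.IsPrimaryIdeal {x | A.sup x x ∈ M} :=
      (isPrimaryFilter_dual_iff A).mp
        (primaryFilter_of_ultra (dual A) M {A.top} ⟨A.top, rfl⟩ hMm hMinf hMup hMavoid hMprime)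
    set I : PrimI A := ⟨{x | A.sup x x ∈ M}, hprim⟩ with hIdef
    have hmemW : ∀ w ∈ W, I ∈ Iset A w := by
      intro w hw
      show A.sup w w ∈ M
      apply hSM
      exact ⟨w, hw, A.bot, hVbot, (inf_t (dual A) (meet_idem (dual A) w w)).symm⟩
    have hmemV : ∀ v ∈ V, I ∈ Iset A v := by
      intro v hv
      show A.sup v v ∈ M
      apply hSM
      refine ⟨A.bot, hWbot, v, hv, ?_⟩
      have hcomm : A.sup (A.sup A.bot A.bot) (A.sup v v) = A.sup v v := by
        calc A.sup (A.sup A.bot A.bot) (A.sup v v)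
            = A.sup (A.sup v v) (A.sup A.bot A.bot) := A.ax2b ..
        _ = A.sup v v := inf_t (dual A) (meet_idem (dual A) v v)
      exact hcomm.symm
    exact (hAV I hmemV) (hAW I hmemW)

end TopologyLemmas

/-! ### Clopen-ness and the proto condition for the image -/

section FinalLemmas

open DBA

variable {D : Type u} (A : DBA D)

lemma fset_closed (z : D) : @IsClosed _ (filtTop A) (Fset A z) := by
  letI := filtTop A
  rw [← isOpen_compl_iff]
  exact TopologicalSpace.GenerateOpen.basic _ ⟨z, rfl⟩

lemma iset_closed (z : D) : @IsClosed _ (idlTop A) (Iset A z) := by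
  letI := idlTop A
  rw [← isOpen_compl_iff]
  exact TopologicalSpace.GenerateOpen.basic _ ⟨z, rfl⟩

lemma isClopen_Fset_neg (x : D) : @IsClopen _ (filtTop A) (Fset A (A.neg x)) := by
  letI := filtTop A
  constructor
  · exact fset_closed A (A.neg x)
  · rw [Fset_neg]
    exact (fset_closed A x).isOpen_compl

lemma isClopen_Iset (x : D) : @IsClopen _ (idlTop A) (Iset A x) := by
  letI := idlTop A
  constructor
  · exact iset_closed A x
  · rw [← compl_compl (Iset A x), ← Iset_dneg]
    exact (iset_closed A (A.dneg x)).isOpen_compl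

lemma protoEmb_isProto (x : D) : IsProto (nabla A) (protoEmb A x) := by
  show odia (nabla A) (obbox (nabla A) (Fset A (A.neg x))) = odia (nabla A) (Iset A x)
  rw [← A.ax4a x, obbox_Fset_neg A _ (meet_idem A x x), ← Iset_s A (A.inf x x),
    odia_Iset A _ (join_idem A (A.inf x x) (A.inf x x)),
    ← Iset_s A x, odia_Iset A _ (join_idem A x x), A.ax12, A.ax4a]

end FinalLemmas

/-- Representation theorem for fully contextual dBas: for a fully
contextual dBa D, h(x) := (F_{¬x}, I_x) is a dBa isomorphism from D onto the dBa of
clopen object oriented protoconcepts of K^T_pr(D). -/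
theorem stmt17 {D : Type u} (A : DBA D) (hA : A.FullyContextual) :
    (∀ x y : D, protoEmb A (A.inf x y) = pinf (nabla A) (protoEmb A x) (protoEmb A y)) ∧
    (∀ x y : D, protoEmb A (A.sup x y) = psup (nabla A) (protoEmb A x) (protoEmb A y)) ∧
    (∀ x : D, protoEmb A (A.neg x) = pneg (nabla A) (protoEmb A x)) ∧
    (∀ x : D, protoEmb A (A.dneg x) = pdneg (nabla A) (protoEmb A x)) ∧
    protoEmb A A.top = ptop ∧
    protoEmb A A.bot = pbot ∧
    Set.BijOn (protoEmb A) Set.univ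
      {p | @IsClopenProto (PrimF A) (PrimI A) (filtTop A) (idlTop A) (nabla A) p} := by
  refine ⟨protoEmb_inf A, protoEmb_sup A, protoEmb_neg A, protoEmb_dneg A,
    protoEmb_top A, protoEmb_bot A, ?_, ?_, ?_⟩
  · -- MapsTo
    intro x _
    exact ⟨protoEmb_isProto A x, isClopen_Fset_neg A x, isClopen_Iset A x⟩
  · -- InjOn
    intro x _ y _ hxy
    have h1 : Fset A (A.neg x) = Fset A (A.neg y) := congrArg Prod.fst hxy
    have h2 : Iset A x = Iset A y := congrArg Prod.snd hxy
    rw [Fset_neg, Fset_neg] at h1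
    have h1' : Fset A x = Fset A y := compl_injective h1
    have hm : A.inf x x = A.inf y y :=
      DBA.m_eq_of_filters A fun F hF => Set.ext_iff.mp h1' ⟨F, hF⟩
    have hs : A.sup x x = A.sup y y :=
      DBA.s_eq_of_ideals A fun I hI => Set.ext_iff.mp h2 ⟨I, hI⟩
    obtain ⟨z, _, huniq⟩ := hA.2 (A.inf x x) (A.sup x x) (DBA.meet_idem A x x)
      (DBA.join_idem A x x) (A.ax12 x)
    have hx : x = z := huniq x ⟨rfl, rfl⟩
    have hy : y = z := huniq y ⟨hm.symm, hs.symm⟩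
    rw [hx, hy]
  · -- SurjOn
    intro p hp
    obtain ⟨hproto, hcl1, hcl2⟩ := hp
    obtain ⟨u, hu, hAu⟩ := clopen_filt_eq_Fset A p.1 hcl1.1 hcl1.2
    obtain ⟨q, hq, hBq⟩ := clopen_idl_eq_Iset A p.2 hcl2.1 hcl2.2
    have hproto' : odia (nabla A) (obbox (nabla A) (Fset A u)) = odia (nabla A) (Iset A q) := by
      rw [← hAu, ← hBq]; exact hproto
    have hnnu : A.neg (A.neg u) = u := by rw [DBA.negneg, hu]
    rw [← hnnu, obbox_Fset_neg A _ (DBA.neg_idem A u),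
      ← Iset_s A (A.neg u),
      odia_Iset A _ (DBA.join_idem A (A.neg u) (A.neg u)),
      odia_Iset A q hq] at hproto'
    -- hproto' : Fset A (¬ (s ¬u)) = Fset A (¬ q)
    have hmeq : A.inf (A.neg (A.sup (A.neg u) (A.neg u))) (A.neg (A.sup (A.neg u) (A.neg u)))
        = A.inf (A.neg q) (A.neg q) :=
      DBA.m_eq_of_filters A fun F hF => Set.ext_iff.mp hproto' ⟨F, hF⟩
    rw [DBA.neg_idem, DBA.neg_idem] at hmeq
    have hkey : A.sup (A.neg u) (A.neg u) = A.inf q q := by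
      have := congrArg A.neg hmeq
      rw [DBA.negneg, DBA.negneg] at this
      rwa [DBA.m_s_of_m A (DBA.neg_idem A u)] at this
    obtain ⟨z, ⟨hz1, hz2⟩, _⟩ := hA.2 (A.neg u) q (DBA.neg_idem A u) hq hkey
    refine ⟨z, Set.mem_univ z, ?_⟩
    have hfst : Fset A (A.neg z) = p.1 := by
      rw [hAu, ← A.ax4a z, hz1, DBA.negneg, hu]
    have hsnd : Iset A z = p.2 := by
      rw [hBq, ← Iset_s A z, hz2]
    exact Prod.ext hfst hsnd
end

section
/- Let K^T = ((G,τ₁),(M,τ₂),R) be a Stone context, and let S^T(K^T) denote the pure dBa of clopen object oriented semiconcepts of K^T. For g ∈ G define k₁(g) := {(A,B) ∈ S^T(K^T) : g ∉ A}, and for m ∈ M define k₂(m) := {(A,B) ∈ S^T(K^T) : m ∈ B}. Then k₁(g) is a primary filter of S^T(K^T) for every g ∈ G, k₂(m) is a primary ideal of S^T(K^T) for every m ∈ M, and the pair (k₁,k₂) is a CTSCR-homeomorphism from K^T to K^T_pr(S^T(K^T)): k₁ and k₂ are homeomorphisms onto (F_pr(S^T(K^T)),T) and (I_pr(S^T(K^T)),J)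 respectively, and g R m ⟺ k₁(g) ∩ k₂(m) = ∅ for all g ∈ G, m ∈ M. -/
universe u v

set_option linter.unusedSectionVars false
section Aux

variable {G : Type u} {M : Type v} [TopologicalSpace G] [TopologicalSpace M]
  {R : G → M → Prop}

lemma obbox_compl (R : G → M → Prop) (A : Set G) : (obbox R A)ᶜ = obdia R Aᶜ := by
  ext m; simp only [obbox, obdia, Set.mem_compl_iff, Set.mem_setOf_eq]
  push_neg; tauto

lemma odia_compl (R : G → M → Prop) (B : Set M) : (odia R B)ᶜ = obox R Bᶜ := by
  ext g; simp only [odia, obox, Set.mem_compl_iff, Set.mem_setOf_eq]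
  push_neg; tauto

lemma clopen_obbox (hRinv : ContRelInv R) {A : Set G} (hA : IsClopen A) :
    IsClopen (obbox R A) := by
  constructor
  · rw [← isOpen_compl_iff, obbox_compl]
    exact (hRinv Aᶜ hA.1.isOpen_compl).1
  · exact (hRinv A hA.2).2

lemma clopen_odia (hR : ContRel R) {B : Set M} (hB : IsClopen B) :
    IsClopen (odia R B) := by
  constructor
  · rw [← isOpen_compl_iff, odia_compl]
    exact (hR Bᶜ hB.1.isOpen_compl).2
  · exact (hR B hB.2).1

lemma clopenSemi_pinf (hRinv : ContRelInv R) {p q : Set G × Set M}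
    (hp : IsClopen p.1) (hq : IsClopen q.1) : IsClopenSemi R (pinf R p q) :=
  ⟨Or.inl rfl, hp.union hq, clopen_obbox hRinv (hp.union hq)⟩

lemma clopenSemi_psup (hR : ContRel R) {p q : Set G × Set M}
    (hp : IsClopen p.2) (hq : IsClopen q.2) : IsClopenSemi R (psup R p q) :=
  ⟨Or.inr rfl, clopen_odia hR (hp.inter hq), hp.inter hq⟩

lemma clopenSemi_pneg (hRinv : ContRelInv R) {p : Set G × Set M}
    (hp : IsClopen p.1) : IsClopenSemi R (pneg R p) :=
  ⟨Or.inl rfl, hp.compl, clopen_obbox hRinv hp.compl⟩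

lemma clopenSemi_pdneg (hR : ContRel R) {p : Set G × Set M}
    (hp : IsClopen p.2) : IsClopenSemi R (pdneg R p) :=
  ⟨Or.inr rfl, clopen_odia hR hp.compl, hp.compl⟩

lemma pbot_eq : (pbot : Set G × Set M) = (Set.univ, Set.univ) := rfl

lemma obbox_univ (R : G → M → Prop) : obbox R (Set.univ : Set G) = Set.univ := by
  ext m; simp [obbox]

lemma odia_empty (R : G → M → Prop) : odia R (∅ : Set M) = ∅ := by
  ext g; simp [odia]

lemma clopenSemi_pbot : IsClopenSemi R (pbot : Set G × Set M) :=
  ⟨Or.inl (obbox_univ R), isClopen_univ, isClopen_univ⟩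

lemma clopenSemi_ptop : IsClopenSemi R (ptop : Set G × Set M) :=
  ⟨Or.inr (odia_empty R), isClopen_empty, isClopen_empty⟩

/-- membership of pbot in a primary filter makes it improper -/
lemma pbot_not_mem {F : Set (Set G × Set M)} (hF : IsSemiPrimFilter R F) :
    (pbot : Set G × Set M) ∉ F := by
  intro h
  apply hF.2.2.2.1
  apply Set.eq_of_subset_of_subset
  · intro p hp; exact hF.1 p hp
  · intro p hp
    exact hF.2.2.1 pbot h p hp ⟨Set.subset_univ _, Set.subset_univ _⟩

lemma ptop_not_mem {I : Set (Set G × Set M)} (hI : IsSemiPrimIdeal R I) :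
    (ptop : Set G × Set M) ∉ I := by
  intro h
  apply hI.2.2.2.1
  apply Set.eq_of_subset_of_subset
  · intro p hp; exact hI.1 p hp
  · intro p hp
    exact hI.2.2.1 ptop h p hp ⟨Set.empty_subset _, Set.empty_subset _⟩

lemma fst_ne_univ {F : Set (Set G × Set M)} (hF : IsSemiPrimFilter R F)
    {p : Set G × Set M} (hp : p ∈ F) : p.1 ≠ Set.univ := by
  intro h
  apply pbot_not_mem hF
  have h2 := hF.2.1 p hp p hp
  have : pinf R p p = pbot := by
    simp only [pinf, pbot, Set.union_self, h, obbox_univ]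
  rwa [this] at h2

lemma snd_ne_empty {I : Set (Set G × Set M)} (hI : IsSemiPrimIdeal R I)
    {p : Set G × Set M} (hp : p ∈ I) : p.2 ≠ ∅ := by
  intro h
  apply ptop_not_mem hI
  have h2 := hI.2.1 p hp p hp
  have : psup R p p = ptop := by
    simp only [psup, ptop, Set.inter_self, h, odia_empty]
  rwa [this] at h2

/-- p and pneg p cannot both be in a primary filter -/
lemma not_both_pneg {F : Set (Set G × Set M)} (hF : IsSemiPrimFilter R F)
    {p : Set G × Set M} (hp : p ∈ F) (hnp : pneg R p ∈ F) : False := by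
  apply pbot_not_mem hF
  have h2 := hF.2.1 p hp (pneg R p) hnp
  have : pinf R p (pneg R p) = pbot := by
    simp only [pinf, pneg, pbot, Set.union_compl_self, obbox_univ]
  rwa [this] at h2

lemma not_both_pdneg {I : Set (Set G × Set M)} (hI : IsSemiPrimIdeal R I)
    {p : Set G × Set M} (hp : p ∈ I) (hnp : pdneg R p ∈ I) : False := by
  apply ptop_not_mem hI
  have h2 := hI.2.1 p hp (pdneg R p) hnp
  have : psup R p (pdneg R p) = ptop := by
    simp only [psup, pdneg, ptop, Set.inter_compl_self, odia_empty]
  rwa [this] at h2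

lemma k1_filter (hRinv : ContRelInv R) (g : G) :
    IsSemiPrimFilter R {p | IsClopenSemi R p ∧ g ∉ p.1} := by
  refine ⟨fun p hp => hp.1, ?_, ?_, ?_, ?_⟩
  · rintro p ⟨hp, hg⟩ q ⟨hq, hg'⟩
    refine ⟨clopenSemi_pinf hRinv hp.2.1 hq.2.1, ?_⟩
    simp only [pinf, Set.mem_union]
    rintro (h | h) <;> [exact hg h; exact hg' h]
  · rintro p ⟨hp, hg⟩ z hz hle
    exact ⟨hz, fun h => hg (hle.1 h)⟩
  · intro h
    have : (pbot : Set G × Set M) ∈ {p | IsClopenSemi R p ∧ g ∉ p.1} := by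
      rw [h]; exact clopenSemi_pbot
    exact this.2 (Set.mem_univ g)
  · intro p hp
    by_cases hg : g ∈ p.1
    · right
      exact ⟨clopenSemi_pneg hRinv hp.2.1, fun h => h hg⟩
    · left; exact ⟨hp, hg⟩

lemma k2_ideal (hR : ContRel R) (m : M) :
    IsSemiPrimIdeal R {p | IsClopenSemi R p ∧ m ∈ p.2} := by
  refine ⟨fun p hp => hp.1, ?_, ?_, ?_, ?_⟩
  · rintro p ⟨hp, hm⟩ q ⟨hq, hm'⟩
    exact ⟨clopenSemi_psup hR hp.2.2 hq.2.2, ⟨hm, hm'⟩⟩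
  · rintro p ⟨hp, hm⟩ z hz hle
    exact ⟨hz, hle.2 hm⟩
  · intro h
    have : (ptop : Set G × Set M) ∈ {p | IsClopenSemi R p ∧ m ∈ p.2} := by
      rw [h]; exact clopenSemi_ptop
    exact this.2
  · intro p hp
    by_cases hm : m ∈ p.2
    · left; exact ⟨hp, hm⟩
    · right
      exact ⟨clopenSemi_pdneg hR hp.2.2, hm⟩

end Aux

section Aux2

variable {G : Type u} {M : Type v} [TopologicalSpace G] [TopologicalSpace M]
  {R : G → M → Prop}

lemma k1_inj (hRinv : ContRelInv R)
    (hGtd : ∀ a b : G, a ≠ b → ∃ U : Set G, IsClopen U ∧ a ∈ U ∧ b ∉ U)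
    {g g' : G} (h : {p : Set G × Set M | IsClopenSemi R p ∧ g ∉ p.1} =
      {p : Set G × Set M | IsClopenSemi R p ∧ g' ∉ p.1}) : g = g' := by
  by_contra hne
  obtain ⟨U, hU, hg, hg'⟩ := hGtd g g' hne
  have hsemi : IsClopenSemi R ((U, obbox R U) : Set G × Set M) :=
    ⟨Or.inl rfl, hU, clopen_obbox hRinv hU⟩
  have hmem : ((U, obbox R U) : Set G × Set M) ∈
      {p : Set G × Set M | IsClopenSemi R p ∧ g' ∉ p.1} := ⟨hsemi, hg'⟩
  rw [← h] at hmem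
  exact hmem.2 hg

lemma k2_inj (hR : ContRel R)
    (hMtd : ∀ a b : M, a ≠ b → ∃ U : Set M, IsClopen U ∧ a ∈ U ∧ b ∉ U)
    {m m' : M} (h : {p : Set G × Set M | IsClopenSemi R p ∧ m ∈ p.2} =
      {p : Set G × Set M | IsClopenSemi R p ∧ m' ∈ p.2}) : m = m' := by
  by_contra hne
  obtain ⟨V, hV, hm, hm'⟩ := hMtd m m' hne
  have hsemi : IsClopenSemi R ((odia R V, V) : Set G × Set M) :=
    ⟨Or.inr rfl, clopen_odia hR hV, hV⟩
  have hmem : ((odia R V, V) : Set G × Set M) ∈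
      {p : Set G × Set M | IsClopenSemi R p ∧ m ∈ p.2} := ⟨hsemi, hm⟩
  rw [h] at hmem
  exact hm' hmem.2

lemma k1_surj (hGc : CompactSpace G) {F : Set (Set G × Set M)}
    (hF : IsSemiPrimFilter R F) :
    ∃ g : G, F = {p : Set G × Set M | IsClopenSemi R p ∧ g ∉ p.1} := by
  have hne : F.Nonempty := by
    rcases hF.2.2.2.2 ptop clopenSemi_ptop with h | h
    exacts [⟨_, h⟩, ⟨_, h⟩]
  haveI : Nonempty F := hne.to_subtype
  have key : (⋂ p : F, (p.val.1)ᶜ).Nonempty := by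
    apply IsCompact.nonempty_iInter_of_directed_nonempty_isCompact_isClosed
    · rintro ⟨p, hp⟩ ⟨q, hq⟩
      refine ⟨⟨pinf R p q, hF.2.1 p hp q hq⟩, ?_, ?_⟩
      · exact Set.compl_subset_compl.mpr Set.subset_union_left
      · exact Set.compl_subset_compl.mpr Set.subset_union_right
    · rintro ⟨p, hp⟩
      exact Set.nonempty_compl.mpr (fst_ne_univ hF hp)
    · rintro ⟨p, hp⟩
      exact ((hF.1 p hp).2.1.2.isClosed_compl).isCompact
    · rintro ⟨p, hp⟩
      exact (hF.1 p hp).2.1.2.isClosed_compl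
  obtain ⟨g, hg⟩ := key
  rw [Set.mem_iInter] at hg
  refine ⟨g, Set.eq_of_subset_of_subset ?_ ?_⟩
  · intro p hp
    exact ⟨hF.1 p hp, hg ⟨p, hp⟩⟩
  · rintro p ⟨hps, hgp⟩
    rcases hF.2.2.2.2 p hps with h | h
    · exact h
    · exact absurd (not_not.mp fun hc => (hg ⟨pneg R p, h⟩) hc) hgp

lemma k2_surj (hMc : CompactSpace M) {I : Set (Set G × Set M)}
    (hI : IsSemiPrimIdeal R I) :
    ∃ m : M, I = {p : Set G × Set M | IsClopenSemi R p ∧ m ∈ p.2} := by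
  have hne : I.Nonempty := by
    rcases hI.2.2.2.2 pbot clopenSemi_pbot with h | h
    exacts [⟨_, h⟩, ⟨_, h⟩]
  haveI : Nonempty I := hne.to_subtype
  have key : (⋂ p : I, p.val.2).Nonempty := by
    apply IsCompact.nonempty_iInter_of_directed_nonempty_isCompact_isClosed
    · rintro ⟨p, hp⟩ ⟨q, hq⟩
      refine ⟨⟨psup R p q, hI.2.1 p hp q hq⟩, ?_, ?_⟩
      · exact Set.inter_subset_left
      · exact Set.inter_subset_right
    · rintro ⟨p, hp⟩
      exact Set.nonempty_iff_ne_empty.mpr (snd_ne_empty hI hp)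
    · rintro ⟨p, hp⟩
      exact (hI.1 p hp).2.2.1.isCompact
    · rintro ⟨p, hp⟩
      exact (hI.1 p hp).2.2.1
  obtain ⟨m, hm⟩ := key
  rw [Set.mem_iInter] at hm
  refine ⟨m, Set.eq_of_subset_of_subset ?_ ?_⟩
  · intro p hp
    exact ⟨hI.1 p hp, hm ⟨p, hp⟩⟩
  · rintro p ⟨hps, hmp⟩
    rcases hI.2.2.2.2 p hps with h | h
    · exact h
    · exact absurd (hm ⟨pdneg R p, h⟩) (not_not.mpr hmp)

lemma semiPF_t2 (hRinv : ContRelInv R) : @T2Space (SemiPF R) (semiPFTop R) := by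
  letI := semiPFTop R
  have sep : ∀ (X Y : SemiPF R) (p : Set G × Set M), p ∈ X.val → p ∉ Y.val →
      ∃ u v : Set (SemiPF R), IsOpen u ∧ IsOpen v ∧ X ∈ u ∧ Y ∈ v ∧ Disjoint u v := by
    intro X Y p hpX hpY
    have hps : IsClopenSemi R p := X.prop.1 p hpX
    refine ⟨{H : SemiPF R | pneg R p ∈ H.val}ᶜ, {H : SemiPF R | p ∈ H.val}ᶜ, ?_, ?_, ?_, hpY, ?_⟩
    · exact TopologicalSpace.isOpen_generateFrom_of_mem
        ⟨pneg R p, clopenSemi_pneg hRinv hps.2.1, rfl⟩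
    · exact TopologicalSpace.isOpen_generateFrom_of_mem ⟨p, hps, rfl⟩
    · exact fun hc => not_both_pneg X.prop hpX hc
    · rw [Set.disjoint_left]
      intro H h1 h2
      rcases H.prop.2.2.2.2 p hps with h | h
      · exact h2 h
      · exact h1 h
  constructor
  intro F F' hne
  have : ∃ p, (p ∈ F.val ∧ p ∉ F'.val) ∨ (p ∈ F'.val ∧ p ∉ F.val) := by
    by_contra h
    push_neg at h
    apply hne
    apply Subtype.ext
    ext p
    have := h p
    tauto
  obtain ⟨p, hp | hp⟩ := this
  · exact sep F F' p hp.1 hp.2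
  · obtain ⟨u, v, hu, hv, h1, h2, hd⟩ := sep F' F p hp.1 hp.2
    exact ⟨v, u, hv, hu, h2, h1, hd.symm⟩

lemma semiPI_t2 (hR : ContRel R) : @T2Space (SemiPI R) (semiPITop R) := by
  letI := semiPITop R
  have sep : ∀ (X Y : SemiPI R) (p : Set G × Set M), p ∈ X.val → p ∉ Y.val →
      ∃ u v : Set (SemiPI R), IsOpen u ∧ IsOpen v ∧ X ∈ u ∧ Y ∈ v ∧ Disjoint u v := by
    intro X Y p hpX hpY
    have hps : IsClopenSemi R p := X.prop.1 p hpX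
    refine ⟨{H : SemiPI R | pdneg R p ∈ H.val}ᶜ, {H : SemiPI R | p ∈ H.val}ᶜ, ?_, ?_, ?_, hpY, ?_⟩
    · exact TopologicalSpace.isOpen_generateFrom_of_mem
        ⟨pdneg R p, clopenSemi_pdneg hR hps.2.2, rfl⟩
    · exact TopologicalSpace.isOpen_generateFrom_of_mem ⟨p, hps, rfl⟩
    · exact fun hc => not_both_pdneg X.prop hpX hc
    · rw [Set.disjoint_left]
      intro H h1 h2
      rcases H.prop.2.2.2.2 p hps with h | h
      · exact h2 h
      · exact h1 h
  constructor
  intro F F' hne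
  have : ∃ p, (p ∈ F.val ∧ p ∉ F'.val) ∨ (p ∈ F'.val ∧ p ∉ F.val) := by
    by_contra h
    push_neg at h
    apply hne
    apply Subtype.ext
    ext p
    have := h p
    tauto
  obtain ⟨p, hp | hp⟩ := this
  · exact sep F F' p hp.1 hp.2
  · obtain ⟨u, v, hu, hv, h1, h2, hd⟩ := sep F' F p hp.1 hp.2
    exact ⟨v, u, hv, hu, h2, h1, hd.symm⟩

lemma k1_continuous {e : G → SemiPF R}
    (he : ∀ g, (e g).val = {p : Set G × Set M | IsClopenSemi R p ∧ g ∉ p.1}) :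
    @Continuous G (SemiPF R) _ (semiPFTop R) e := by
  rw [semiPFTop, continuous_generateFrom_iff]
  rintro s ⟨p, hp, rfl⟩
  have : e ⁻¹' {F : SemiPF R | p ∈ F.val}ᶜ = p.1 := by
    ext g
    simp only [Set.mem_preimage, Set.mem_compl_iff, Set.mem_setOf_eq, he g]
    simp [hp]
  rw [this]
  exact hp.2.1.2

lemma k2_continuous {e : M → SemiPI R}
    (he : ∀ m, (e m).val = {p : Set G × Set M | IsClopenSemi R p ∧ m ∈ p.2}) :
    @Continuous M (SemiPI R) _ (semiPITop R) e := by
  rw [semiPITop, continuous_generateFrom_iff]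
  rintro s ⟨p, hp, rfl⟩
  have : e ⁻¹' {I : SemiPI R | p ∈ I.val}ᶜ = p.2ᶜ := by
    ext m
    simp only [Set.mem_preimage, Set.mem_compl_iff, Set.mem_setOf_eq, he m]
    simp [hp]
  rw [this]
  exact hp.2.2.1.isOpen_compl

end Aux2

/-- For a Stone context K^T, k₁(g) := {(A,B) ∈ S^T(K^T) : g ∉ A} is a
primary filter and k₂(m) := {(A,B) ∈ S^T(K^T) : m ∈ B} is a primary ideal of the pure
dBa of clopen object oriented semiconcepts, and (k₁,k₂) is a CTSCR-homeomorphism from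
K^T to K^T_pr(S^T(K^T)). -/
theorem stmt19 {G : Type u} {M : Type v}
    [tG : TopologicalSpace G] [tM : TopologicalSpace M]
    (R : G → M → Prop) (hR : ContRel R) (hRinv : ContRelInv R)
    (hGc : CompactSpace G) (hMc : CompactSpace M)
    (hGtd : ∀ a b : G, a ≠ b → ∃ U : Set G, IsClopen U ∧ a ∈ U ∧ b ∉ U)
    (hMtd : ∀ a b : M, a ≠ b → ∃ U : Set M, IsClopen U ∧ a ∈ U ∧ b ∉ U)
    (hstone : ∀ g m,
      (∀ p : Set G × Set M, IsClopenSemi R p → m ∈ p.2 → g ∈ p.1) → R g m) :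
    (∀ g : G, IsSemiPrimFilter R {p | IsClopenSemi R p ∧ g ∉ p.1}) ∧
    (∀ m : M, IsSemiPrimIdeal R {p | IsClopenSemi R p ∧ m ∈ p.2}) ∧
    ∃ (e : G ≃ SemiPF R) (e' : M ≃ SemiPI R),
      (∀ g : G, (e g).val = {p | IsClopenSemi R p ∧ g ∉ p.1}) ∧
      (∀ m : M, (e' m).val = {p | IsClopenSemi R p ∧ m ∈ p.2}) ∧
      @Continuous G (SemiPF R) tG (semiPFTop R) e ∧
      @Continuous (SemiPF R) G (semiPFTop R) tG e.symm ∧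
      @Continuous M (SemiPI R) tM (semiPITop R) e' ∧
      @Continuous (SemiPI R) M (semiPITop R) tM e'.symm ∧
      (∀ (g : G) (m : M), R g m ↔ (e g).val ∩ (e' m).val = ∅) := by
  
  haveI := hGc
  haveI := hMc
  refine ⟨fun g => k1_filter hRinv g, fun m => k2_ideal hR m, ?_⟩
  let e : G → SemiPF R := fun g =>
    ⟨{p : Set G × Set M | IsClopenSemi R p ∧ g ∉ p.1}, k1_filter hRinv g⟩
  let e' : M → SemiPI R := fun m =>
    ⟨{p : Set G × Set M | IsClopenSemi R p ∧ m ∈ p.2}, k2_ideal hR m⟩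
  have ebij : Function.Bijective e := by
    constructor
    · intro g g' h
      exact k1_inj hRinv hGtd (congrArg Subtype.val h)
    · intro F
      obtain ⟨g, hg⟩ := k1_surj hGc F.prop
      exact ⟨g, Subtype.ext hg.symm⟩
  have ebij' : Function.Bijective e' := by
    constructor
    · intro m m' h
      exact k2_inj hR hMtd (congrArg Subtype.val h)
    · intro I
      obtain ⟨m, hm⟩ := k2_surj hMc I.prop
      exact ⟨m, Subtype.ext hm.symm⟩
  let E : G ≃ SemiPF R := Equiv.ofBijective e ebij
  let E' : M ≃ SemiPI R := Equiv.ofBijective e' ebij'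
  letI := semiPFTop R
  letI := semiPITop R
  haveI : T2Space (SemiPF R) := semiPF_t2 hRinv
  haveI : T2Space (SemiPI R) := semiPI_t2 hR
  have hc1 : Continuous E := k1_continuous (fun g => rfl)
  have hc2 : Continuous E' := k2_continuous (fun m => rfl)
  refine ⟨E, E', fun g => rfl, fun m => rfl, hc1, ?_, hc2, ?_, ?_⟩
  · exact hc1.continuous_symm_of_equiv_compact_to_t2
  · exact hc2.continuous_symm_of_equiv_compact_to_t2
  · intro g m
    constructor
    · intro hRgm
      apply Set.eq_empty_iff_forall_notMem.mpr
      rintro p ⟨⟨hps, hg⟩, ⟨-, hm⟩⟩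
      rcases hps.1 with hb | hd
      · rw [← hb] at hm
        exact hg (hm g hRgm)
      · exact hg (hd ▸ ⟨m, hm, hRgm⟩)
    · intro h
      apply hstone
      intro p hp hm
      by_contra hg
      have : p ∈ (E g).val ∩ (E' m).val := ⟨⟨hp, hg⟩, ⟨hp, hm⟩⟩
      rw [h] at this
      exact this
end
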